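/- arXiv:2407.08873 — 8 statements merged into one kernel-verified Lean document; each statement's English description precedes it below -/
import Mathlib

section
/- For all positive integers m and t there exists a constant C = C(m,t) > 0 with the following property: for every positive integer n, every simple graph G on 2n vertices with at least C·(2n)^{2−1/t} edges contains a set S of m vertices such that every subset X ⊆ S with |X| = t has at least m common neighbors in G. -/
/-!
Let `A(u)` be the common neighbourhood of the entries of a `t`-tuple `u` of vertices. Summing over
all `N^t` tuples, `∑ᵤ |A(u)| = ∑ᵥ deg(v)^t`, which by the power mean inequality is at least
`(2e)^t / N^(t-1)`. A `t`-set `X` with fewer than `m` common neighbours lies in `A(u)` for at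
most `(m-1)^t` tuples `u`. Hence for some `u`, `|A(u)|` exceeds the number of such bad `t`-sets
inside `A(u)` by at least `m`, and deleting one vertex from each of them leaves the required set.
-/

open Finset

theorem Finset.sum_card_filter_forall_eq_sum_card_pow {α β : Type*} [Fintype β]
    (r : α → β → Prop) [∀ a b, Decidable (r a b)] (s : Finset α) (t : ℕ) :
    ∑ u : Fin t → β, #{a ∈ s | ∀ i, r a (u i)} = ∑ a ∈ s, #{b | r a b} ^ t := by
  have := sum_card_bipartiteAbove_eq_sum_card_bipartiteBelow
    (fun a (u : Fin t → β) => ∀ i, r a (u i)) (s := s) (t := univ)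
  refine this.symm.trans (sum_congr rfl fun a _ => ?_)
  rw [← Fintype.card_piFinset_const]
  congr 1
  ext u
  simp [bipartiteAbove, Fintype.mem_piFinset]

theorem Finset.exists_subset_card_eq_forall_not_subset {α : Type*} [DecidableEq α]
    {A : Finset α} {B : Finset (Finset α)} {m : ℕ} (hB : ∀ X ∈ B, X.Nonempty)
    (h : m + #B ≤ #A) : ∃ S ⊆ A, #S = m ∧ ∀ X ∈ B, ¬X ⊆ S := by
  choose pick hpick using hB
  set D := B.attach.image fun X => pick X.1 X.2
  have hD : #D ≤ #B := card_image_le.trans_eq card_attach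
  obtain ⟨S, hSA, hSm⟩ := exists_subset_card_eq (s := A \ D) (n := m)
    (by have := le_card_sdiff D A; omega)
  refine ⟨S, hSA.trans sdiff_subset, hSm, fun X hX hXS => ?_⟩
  exact (mem_sdiff.1 (hSA (hXS (hpick X hX)))).2
    (mem_image.2 ⟨⟨X, hX⟩, mem_attach _ _, rfl⟩)

namespace SimpleGraph

variable {V : Type*} [Fintype V] (G : SimpleGraph V) [DecidableRel G.Adj]

def commonNeighborFinset (X : Finset V) : Finset V := {v | ∀ x ∈ X, G.Adj v x}

theorem coe_commonNeighborFinset (X : Finset V) :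
    (G.commonNeighborFinset X : Set V) = {v | ∀ x ∈ X, G.Adj v x} := by
  ext
  simp [commonNeighborFinset]

theorem mem_commonNeighborFinset {X : Finset V} {v : V} :
    v ∈ G.commonNeighborFinset X ↔ ∀ x ∈ X, G.Adj v x := by
  simp [commonNeighborFinset]

theorem subset_commonNeighborFinset_comm {X Y : Finset V} :
    X ⊆ G.commonNeighborFinset Y ↔ Y ⊆ G.commonNeighborFinset X := by
  simp only [subset_iff, mem_commonNeighborFinset]
  exact ⟨fun h y hy x hx => (h hx y hy).symm, fun h x hx y hy => (h hy x hx).symm⟩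

theorem sum_card_commonNeighborFinset_image [DecidableEq V] (t : ℕ) :
    ∑ u : Fin t → V, #(G.commonNeighborFinset (univ.image u)) = ∑ v, G.degree v ^ t := by
  simp only [← card_neighborFinset_eq_degree, neighborFinset_eq_filter,
    ← sum_card_filter_forall_eq_sum_card_pow G.Adj univ t]
  refine sum_congr rfl fun u _ => congrArg card ?_
  ext v
  simp [mem_commonNeighborFinset]

theorem sum_card_filter_subset_commonNeighborFinset_image [DecidableEq V]
    (B : Finset (Finset V)) (t : ℕ) :
    ∑ u : Fin t → V, #{X ∈ B | X ⊆ G.commonNeighborFinset (univ.image u)}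
      = ∑ X ∈ B, #(G.commonNeighborFinset X) ^ t := by
  have := sum_card_filter_forall_eq_sum_card_pow (fun X v => v ∈ G.commonNeighborFinset X) B t
  simp only [filter_mem_eq_inter, univ_inter] at this
  rw [← this]
  refine sum_congr rfl fun u _ => congrArg card (filter_congr fun X _ => ?_)
  rw [subset_commonNeighborFinset_comm, image_subset_iff]
  simp

theorem exists_forall_le_card_commonNeighborFinset [Nonempty V] {m t : ℕ} (ht : 0 < t)
    (h : m * Fintype.card V ^ t + (Fintype.card V).choose t * (m - 1) ^ t
      ≤ ∑ v, G.degree v ^ t) :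
    ∃ S : Finset V, #S = m ∧ ∀ X ⊆ S, #X = t → m ≤ #(G.commonNeighborFinset X) := by
  classical
  set bad := {X ∈ (univ : Finset V).powersetCard t | #(G.commonNeighborFinset X) < m}
  set A := fun u : Fin t → V => G.commonNeighborFinset (univ.image u)
  have hbad : ∑ X ∈ bad, #(G.commonNeighborFinset X) ^ t
      ≤ (Fintype.card V).choose t * (m - 1) ^ t := by
    calc ∑ X ∈ bad, #(G.commonNeighborFinset X) ^ t ≤ ∑ _X ∈ bad, (m - 1) ^ t :=
          sum_le_sum fun X hX => Nat.pow_le_pow_left (by have := (mem_filter.1 hX).2; omega) t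
      _ ≤ (Fintype.card V).choose t * (m - 1) ^ t := by
          rw [sum_const, smul_eq_mul, ← card_univ, ← card_powersetCard]
          exact Nat.mul_le_mul_right _ (card_filter_le _ _)
  obtain ⟨u, -, hu⟩ : ∃ u ∈ univ, m + #{X ∈ bad | X ⊆ A u} ≤ #(A u) := by
    refine exists_le_of_sum_le univ_nonempty ?_
    rw [sum_add_distrib, sum_const, card_univ, Fintype.card_fun, Fintype.card_fin, smul_eq_mul,
      G.sum_card_filter_subset_commonNeighborFinset_image, G.sum_card_commonNeighborFinset_image,
      mul_comm _ m]
    omega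
  obtain ⟨S, hSA, hSm, hS⟩ :=
    exists_subset_card_eq_forall_not_subset (B := {X ∈ bad | X ⊆ A u})
      (fun X hX => card_pos.1 <| by
        rw [(mem_powersetCard.1 (mem_filter.1 (mem_filter.1 hX).1).1).2]; exact ht) hu
  refine ⟨S, hSm, fun X hXS hXt => ?_⟩
  by_contra! hlt
  exact hS X (mem_filter.2 ⟨mem_filter.2 ⟨mem_powersetCard.2 ⟨subset_univ X, hXt⟩, hlt⟩,
    hXS.trans hSA⟩) hXS

theorem mul_pow_le_sum_degree_pow [Nonempty V] {c : ℝ} (hc : 0 ≤ c) {t : ℕ} (ht : 0 < t)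
    (hG : c * (Fintype.card V : ℝ) ^ ((2 : ℝ) - 1 / t) ≤ #G.edgeFinset) :
    (2 * c) ^ t * (Fintype.card V : ℝ) ^ t ≤ ∑ v, (G.degree v : ℝ) ^ t := by
  set N : ℝ := (Fintype.card V : ℝ)
  have hN : 0 < N := Nat.cast_pos.2 Fintype.card_pos
  have hjensen : (2 * #G.edgeFinset : ℝ) ^ t ≤ N ^ (t - 1) * ∑ v, (G.degree v : ℝ) ^ t := by
    obtain ⟨k, rfl⟩ := Nat.exists_eq_add_of_lt ht
    have := pow_sum_le_card_mul_sum_pow (s := univ) (f := fun v => (G.degree v : ℝ))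
      (fun _ _ => Nat.cast_nonneg _) k
    rw [← Nat.cast_sum, sum_degrees_eq_twice_card_edges] at this
    simpa using this
  have hpow : (N ^ ((2 : ℝ) - 1 / t)) ^ t = N ^ (t - 1) * N ^ t := by
    rw [← Real.rpow_natCast, ← Real.rpow_mul hN.le, ← pow_add, ← Real.rpow_natCast]
    congr 1
    push_cast [Nat.cast_sub ht, show t ≤ t - 1 + t by omega]
    field_simp
    ring
  have : N ^ (t - 1) * ((2 * c) ^ t * N ^ t) ≤ N ^ (t - 1) * ∑ v, (G.degree v : ℝ) ^ t :=
    calc N ^ (t - 1) * ((2 * c) ^ t * N ^ t) = (2 * (c * N ^ ((2 : ℝ) - 1 / t))) ^ t := by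
          simp only [mul_pow, hpow]; ring
      _ ≤ (2 * #G.edgeFinset : ℝ) ^ t := by gcongr
      _ ≤ _ := hjensen
  exact le_of_mul_le_mul_left this (by positivity)

end SimpleGraph

/-- **Dependent random choice.**
For all positive integers `m` and `t` there exists a constant `C = C(m,t) > 0` such that
every simple graph `G` on `2n` vertices (for any positive `n`) with at least
`C·(2n)^(2 - 1/t)` edges contains a set `S` of `m` vertices such that every subset
`X ⊆ S` with `|X| = t` has at least `m` common neighbors in `G`. -/
theorem dependent_random_choice (m t : ℕ) (hm : 0 < m) (ht : 0 < t) :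
    ∃ C : ℝ, 0 < C ∧
      ∀ n : ℕ, 0 < n → ∀ G : SimpleGraph (Fin (2 * n)),
        C * ((2 * n : ℕ) : ℝ) ^ ((2 : ℝ) - 1 / (t : ℝ)) ≤ (G.edgeSet.ncard : ℝ) →
        ∃ S : Finset (Fin (2 * n)), S.card = m ∧
          ∀ X : Finset (Fin (2 * n)), X ⊆ S → X.card = t →
            m ≤ {v : Fin (2 * n) | ∀ x ∈ X, G.Adj v x}.ncard := by
  refine ⟨m, Nat.cast_pos.2 hm, fun n hn G hG => ?_⟩
  classical
  have : Nonempty (Fin (2 * n)) := ⟨⟨0, by omega⟩⟩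
  rw [← G.coe_edgeFinset, Set.ncard_coe_finset] at hG
  have hdeg := G.mul_pow_le_sum_degree_pow (Nat.cast_nonneg m) ht (by rwa [Fintype.card_fin])
  have hm2 : m + (m - 1) ^ t ≤ (2 * m) ^ t :=
    calc m + (m - 1) ^ t ≤ m ^ t + m ^ t :=
          add_le_add (Nat.le_self_pow ht.ne' m) (Nat.pow_le_pow_left (Nat.sub_le m 1) t)
      _ = 2 * m ^ t := (two_mul _).symm
      _ ≤ 2 ^ t * m ^ t := Nat.mul_le_mul_right _ (Nat.le_self_pow ht.ne' 2)
      _ = (2 * m) ^ t := (mul_pow 2 m t).symm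
  obtain ⟨S, hSm, hS⟩ := G.exists_forall_le_card_commonNeighborFinset (m := m) ht <| by
    rw [Fintype.card_fin] at hdeg ⊢
    calc m * (2 * n) ^ t + (2 * n).choose t * (m - 1) ^ t
        ≤ m * (2 * n) ^ t + (2 * n) ^ t * (m - 1) ^ t := by gcongr; exact Nat.choose_le_pow _ _
      _ = (m + (m - 1) ^ t) * (2 * n) ^ t := by ring
      _ ≤ (2 * m) ^ t * (2 * n) ^ t := by gcongr
      _ ≤ ∑ v, G.degree v ^ t := by exact_mod_cast hdeg
  refine ⟨S, hSm, fun X hXS hXt => ?_⟩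
  rw [← G.coe_commonNeighborFinset, Set.ncard_coe_finset]
  exact hS X hXS hXt
end

section
/- Let t be a positive integer and let T ≥ t be an integer. There exist a constant C > 0 and a positive integer N such that for every n ≥ N, every 2-edge coloring E(K_{n,n}) = R ⊔ B with at least C·n^{2−1/t} edges in each color class contains one of the following: (i) a set X of T vertices in one part of K_{n,n} and disjoint sets Y₁, Y₂ in the other part with |Y₁| = T and |Y₂| = t, together with a color c ∈ {red, blue}, such that every edge between X and Y₁ has color c and every edge between X and Y₂ has the other color (a colored copy of K_{T,t+T} in which one color forms a K_{T,T}); or (ii) a set X of t vertices in one part and disjoint sets Y₁, Y₂ each of T vertices in the other part, together with a color c, such that every edge between X and Y₁ has color c and every edge between X and Y₂ has the other color (a colored copy of K_{t,2T} in which one color forms a K_{t,T}). -/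
/-- The number of red edges in a 2-edge coloring of `K_{n,n}`.  The coloring is encoded
as `c : Fin n → Fin n → Bool`, where `c v w = true` means that the edge between vertex `v`
of the first part and vertex `w` of the second part is red, and `c v w = false` means it
is blue. -/
def redTotal {n : ℕ} (c : Fin n → Fin n → Bool) : ℕ :=
  (Finset.univ.filter fun p : Fin n × Fin n => c p.1 p.2 = true).card

/-- The number of blue edges in a 2-edge coloring of `K_{n,n}`. -/
def blueTotal {n : ℕ} (c : Fin n → Fin n → Bool) : ℕ :=
  (Finset.univ.filter fun p : Fin n × Fin n => c p.1 p.2 = false).card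

/-- `hasPattern c a b₁ b₂` says: the 2-edge coloring `c` of `K_{n,n}` contains a set `X` of
`a` vertices in one part and disjoint sets `Y₁` (of `b₁` vertices) and `Y₂` (of `b₂`
vertices) in the other part, together with a color `col`, such that every edge between `X`
and `Y₁` has color `col` and every edge between `X` and `Y₂` has the other color.
This is a colored copy of `K_{a, b₁ + b₂}` in which one color forms a `K_{a,b₁}`. -/
def hasPattern {n : ℕ} (c : Fin n → Fin n → Bool) (a b₁ b₂ : ℕ) : Prop :=
  ∃ (X Y₁ Y₂ : Finset (Fin n)) (col : Bool),
    X.card = a ∧ Y₁.card = b₁ ∧ Y₂.card = b₂ ∧ Disjoint Y₁ Y₂ ∧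
      (((∀ x ∈ X, ∀ y ∈ Y₁, c x y = col) ∧ (∀ x ∈ X, ∀ y ∈ Y₂, c x y = !col)) ∨
       ((∀ x ∈ X, ∀ y ∈ Y₁, c y x = col) ∧ (∀ x ∈ X, ∀ y ∈ Y₂, c y x = !col)))

section Aux
open Finset
/-- Bound on the number of non-injective functions. -/
lemma noninj_card_le (t n : ℕ) (hn : 1 ≤ n) :
    ((univ : Finset (Fin t → Fin n)).filter fun f => ¬ Function.Injective f).card
      ≤ t ^ 2 * n ^ (t - 1) := by
  classical
  obtain ⟨y₀⟩ : Nonempty (Fin n) := ⟨⟨0, hn⟩⟩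
  have hsub : ((univ : Finset (Fin t → Fin n)).filter fun f => ¬ Function.Injective f)
      ⊆ ((univ : Finset (Fin t × Fin t)).filter fun p => p.1 ≠ p.2).biUnion
        (fun p => (univ : Finset (Fin t → Fin n)).filter fun f => f p.1 = f p.2) := by
    intro f hf
    simp only [mem_filter, mem_univ, true_and] at hf
    simp only [Function.Injective, not_forall] at hf
    obtain ⟨i, j, hij, hne⟩ := hf
    exact mem_biUnion.2 ⟨(i, j), by simp [hne], by simp [hij]⟩
  refine (card_le_card hsub).trans ((card_biUnion_le).trans ?_)
  have hfib : ∀ p : Fin t × Fin t, p.1 ≠ p.2 →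
      ((univ : Finset (Fin t → Fin n)).filter fun f => f p.1 = f p.2).card ≤ n ^ (t - 1) := by
    rintro ⟨i, j⟩ hij
    simp only at hij
    have hinj : Set.InjOn (fun f : Fin t → Fin n => Function.update f j y₀)
        ((univ : Finset (Fin t → Fin n)).filter fun f => f i = f j) := by
      intro f hf g hg hfg
      simp only [coe_filter, Set.mem_setOf_eq] at hf hg
      funext k
      by_cases hk : k = j
      · subst hk
        rw [← hf.2, ← hg.2]
        have := congrFun hfg i
        simpa [Function.update_of_ne hij] using this
      · have := congrFun hfg k
        simpa [Function.update_of_ne hk] using this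
    have hmaps : ∀ f ∈ ((univ : Finset (Fin t → Fin n)).filter fun f => f i = f j),
        Function.update f j y₀ ∈ Fintype.piFinset
          (fun k : Fin t => if k = j then ({y₀} : Finset (Fin n)) else univ) := by
      intro f _
      rw [Fintype.mem_piFinset]
      intro k
      by_cases hk : k = j
      · subst hk; simp
      · simp [hk, Function.update_of_ne hk]
    have hcard := Finset.card_le_card_of_injOn _ hmaps hinj
    refine hcard.trans ?_
    rw [Fintype.card_piFinset]
    have : ∀ k : Fin t, (if k = j then ({y₀} : Finset (Fin n)) else univ).card
        = if k = j then 1 else n := by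
      intro k; split <;> simp
    rw [Finset.prod_congr rfl fun k _ => this k]
    rw [← Finset.mul_prod_erase univ _ (mem_univ j), if_pos rfl, one_mul]
    rw [Finset.prod_congr rfl fun k hk => if_neg (Finset.mem_erase.1 hk).1]
    rw [Finset.prod_const, Finset.card_erase_of_mem (mem_univ j), Finset.card_univ,
      Fintype.card_fin]
  calc ∑ p ∈ ((univ : Finset (Fin t × Fin t)).filter fun p => p.1 ≠ p.2),
        ((univ : Finset (Fin t → Fin n)).filter fun f => f p.1 = f p.2).card
      ≤ ∑ p ∈ ((univ : Finset (Fin t × Fin t)).filter fun p => p.1 ≠ p.2), n ^ (t-1) := by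
        exact Finset.sum_le_sum fun p hp => hfib p (by simpa using (mem_filter.1 hp).2)
    _ ≤ t ^ 2 * n ^ (t - 1) := by
        rw [Finset.sum_const, smul_eq_mul]
        have : ((univ : Finset (Fin t × Fin t)).filter fun p => p.1 ≠ p.2).card ≤ t ^ 2 := by
          refine (card_filter_le _ _).trans ?_
          simp [sq]
        exact Nat.mul_le_mul_right _ this

/-- KST-type counting: a dense bipartite graph contains `K_{t,m}` with the `t`-set
on the row side. -/
lemma key_kst (t m : ℕ) (ht : 0 < t) (hm : 1 ≤ m) (n : ℕ) (hn : 1 ≤ n)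
    (c : Fin n → Fin n → Bool)
    (hdense : ((m + t ^ 2 : ℕ) : ℝ) * (n : ℝ) ^ ((2 : ℝ) - 1 / (t : ℝ))
        ≤ ((univ.filter fun p : Fin n × Fin n => c p.1 p.2 = true).card : ℝ)) :
    ∃ A : Finset (Fin n), A.card = t ∧
      m ≤ (univ.filter fun w : Fin n => ∀ v ∈ A, c v w = true).card := by
  classical
  set d : Fin n → ℕ := fun w => (univ.filter fun v => c v w = true).card with hd
  have hsum : (univ.filter fun p : Fin n × Fin n => c p.1 p.2 = true).card = ∑ w, d w := by
    rw [Finset.card_filter, Fintype.sum_prod_type, Finset.sum_comm]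
    refine Finset.sum_congr rfl fun w _ => ?_
    simp only [hd, Finset.card_filter]
  -- the set of pairs (injective tuple, column fully colored to it)
  set P : Finset ((Fin t → Fin n) × Fin n) :=
    univ.filter fun p => Function.Injective p.1 ∧ ∀ i, c (p.1 i) p.2 = true with hPdef
  set NI : Finset (Fin t → Fin n) := univ.filter fun f => ¬ Function.Injective f with hNI
  have hP1 : P.card = ∑ w : Fin n,
      (univ.filter fun f : Fin t → Fin n =>
        Function.Injective f ∧ ∀ i, c (f i) w = true).card := by
    rw [hPdef, Finset.card_filter, Fintype.sum_prod_type, Finset.sum_comm]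
    simp only [Finset.card_filter]
  have hP2 : P.card = ∑ f : Fin t → Fin n,
      (univ.filter fun w : Fin n =>
        Function.Injective f ∧ ∀ i, c (f i) w = true).card := by
    rw [hPdef, Finset.card_filter, Fintype.sum_prod_type]
    simp only [Finset.card_filter]
  -- per-column lower bound
  have hcol : ∀ w : Fin n, d w ^ t ≤
      (univ.filter fun f : Fin t → Fin n =>
        Function.Injective f ∧ ∀ i, c (f i) w = true).card + NI.card := by
    intro w
    have hpi : (Fintype.piFinset fun _ : Fin t =>
        (univ.filter fun v => c v w = true)).card = d w ^ t := by
      rw [Fintype.card_piFinset]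
      simp [hd]
    have hsub : (Fintype.piFinset fun _ : Fin t =>
        (univ.filter fun v => c v w = true)) ⊆
        ((univ.filter fun f : Fin t → Fin n =>
          Function.Injective f ∧ ∀ i, c (f i) w = true) ∪ NI) := by
      intro f hf
      rw [Fintype.mem_piFinset] at hf
      by_cases hinj : Function.Injective f
      · exact Finset.mem_union_left _ (by
          simp only [mem_filter, mem_univ, true_and]
          exact ⟨hinj, fun i => (mem_filter.1 (hf i)).2⟩)
      · exact Finset.mem_union_right _ (by simp [hNI, hinj])
    calc d w ^ t = _ := hpi.symm
      _ ≤ _ := Finset.card_le_card hsub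
      _ ≤ _ := Finset.card_union_le _ _
  have hsumcol : ∑ w : Fin n, d w ^ t ≤ P.card + n * NI.card := by
    calc ∑ w : Fin n, d w ^ t
        ≤ ∑ w : Fin n, ((univ.filter fun f : Fin t → Fin n =>
            Function.Injective f ∧ ∀ i, c (f i) w = true).card + NI.card) :=
          Finset.sum_le_sum fun w _ => hcol w
      _ = P.card + n * NI.card := by
          rw [Finset.sum_add_distrib, hP1, Finset.sum_const, Finset.card_univ,
            Fintype.card_fin, smul_eq_mul]
  -- real-number chain
  have hn0 : (0:ℝ) < (n:ℝ) := by exact_mod_cast hn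
  have ht0 : ((t:ℝ)) ≠ 0 := by exact_mod_cast ht.ne'
  set Q : ℝ := ((m + t ^ 2 : ℕ) : ℝ) with hQ
  have hQ1 : (1:ℝ) ≤ Q := by
    rw [hQ]; exact_mod_cast Nat.one_le_iff_ne_zero.2 (by positivity)
  have hrpow : ((n:ℝ) ^ ((2:ℝ) - 1 / (t:ℝ))) ^ t = (n:ℝ) ^ (2 * t - 1) := by
    rw [← Real.rpow_natCast ((n:ℝ) ^ ((2:ℝ) - 1 / (t:ℝ))) t, ← Real.rpow_mul hn0.le]
    have h1 : ((2:ℝ) - 1 / (t:ℝ)) * t = ((2 * t - 1 : ℕ) : ℝ) := by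
      have h2 : ((2 * t - 1 : ℕ) : ℝ) = 2 * (t:ℝ) - 1 := by
        rw [Nat.cast_sub (Nat.one_le_iff_ne_zero.2 (Nat.mul_ne_zero two_ne_zero ht.ne'))]; push_cast; ring
      rw [h2]; field_simp
    rw [h1, Real.rpow_natCast]
  have hjensen : ((∑ w : Fin n, d w : ℕ) : ℝ) ^ t / (n:ℝ) ^ (t - 1)
      ≤ ((∑ w : Fin n, d w ^ t : ℕ) : ℝ) := by
    push_cast
    have := pow_sum_div_card_le_sum_pow (s := (univ : Finset (Fin n)))
      (f := fun w => (d w : ℝ)) (fun i _ => by positivity) (t - 1)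
    rwa [Nat.sub_add_cancel ht, Finset.card_univ, Fintype.card_fin] at this
  have hdense' : Q * (n:ℝ) ^ ((2:ℝ) - 1 / (t:ℝ)) ≤ ((∑ w : Fin n, d w : ℕ) : ℝ) := by
    rw [← hsum]; exact hdense
  have he : Q ^ t * (n:ℝ) ^ (2 * t - 1) ≤ ((∑ w : Fin n, d w : ℕ) : ℝ) ^ t := by
    rw [← hrpow, ← mul_pow]
    exact pow_le_pow_left₀ (by positivity) hdense' t
  have hnt : (n:ℝ) ^ (2 * t - 1) / (n:ℝ) ^ (t - 1) = (n:ℝ) ^ t := by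
    rw [div_eq_iff (by positivity), ← pow_add]
    congr 1
    rw [two_mul, Nat.add_sub_assoc ht]
  have hmain : (m : ℝ) * (n:ℝ) ^ t ≤ (P.card : ℝ) := by
    have h1 : Q ^ t * (n:ℝ) ^ t ≤ ((∑ w : Fin n, d w ^ t : ℕ) : ℝ) := by
      calc Q ^ t * (n:ℝ) ^ t = Q ^ t * (n:ℝ) ^ (2 * t - 1) / (n:ℝ) ^ (t - 1) := by
            rw [mul_div_assoc, hnt]
        _ ≤ ((∑ w : Fin n, d w : ℕ) : ℝ) ^ t / (n:ℝ) ^ (t - 1) := by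
            exact div_le_div_of_nonneg_right he (by positivity)
        _ ≤ _ := hjensen
    have h2 : ((∑ w : Fin n, d w ^ t : ℕ) : ℝ) ≤ (P.card : ℝ) + (n:ℝ) * (NI.card : ℝ) := by
      exact_mod_cast hsumcol
    have h3 : (NI.card : ℝ) ≤ (t:ℝ) ^ 2 * (n:ℝ) ^ (t - 1) := by
      exact_mod_cast noninj_card_le t n hn
    have h4 : (n:ℝ) * ((t:ℝ) ^ 2 * (n:ℝ) ^ (t - 1)) = (t:ℝ) ^ 2 * (n:ℝ) ^ t := by
      rw [← mul_assoc, mul_comm (n:ℝ), mul_assoc, ← pow_succ']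
      rw [Nat.sub_add_cancel ht]
    have h5 : Q ^ t - (t:ℝ) ^ 2 ≥ (m : ℝ) := by
      have : Q ≤ Q ^ t := le_self_pow₀ hQ1 ht.ne'
      have hQm : (m : ℝ) + (t:ℝ) ^ 2 = Q := by rw [hQ]; push_cast; ring
      nlinarith
    nlinarith [pow_pos hn0 t, pow_pos hn0 (t-1)]
  -- pigeonhole over injective tuples
  have hmainN : m * n ^ t ≤ P.card := by
    have := hmain
    rw [← Nat.cast_pow, ← Nat.cast_mul] at this
    exact_mod_cast this
  by_contra hcon
  push_neg at hcon
  have hbd : ∀ f : Fin t → Fin n,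
      (univ.filter fun w : Fin n =>
        Function.Injective f ∧ ∀ i, c (f i) w = true).card ≤ m - 1 := by
    intro f
    by_cases hinj : Function.Injective f
    · have hA : (Finset.image f univ).card = t := by
        rw [Finset.card_image_of_injective _ hinj, Finset.card_univ, Fintype.card_fin]
      have hlt := hcon (Finset.image f univ) hA
      have heqf : (univ.filter fun w : Fin n =>
          Function.Injective f ∧ ∀ i, c (f i) w = true)
          = (univ.filter fun w : Fin n => ∀ v ∈ Finset.image f univ, c v w = true) := by
        refine Finset.filter_congr fun w _ => ?_
        simp only [Finset.mem_image, eq_iff_iff]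
        constructor
        · rintro ⟨-, h⟩ v ⟨i, -, rfl⟩; exact h i
        · intro h; exact ⟨hinj, fun i => h (f i) ⟨i, mem_univ i, rfl⟩⟩
      rw [heqf]
      exact Nat.le_pred_of_lt hlt
    · have : (univ.filter fun w : Fin n =>
          Function.Injective f ∧ ∀ i, c (f i) w = true) = ∅ := by
        refine Finset.filter_false_of_mem fun w _ => ?_
        rintro ⟨h, -⟩; exact hinj h
      simp [this]
  have hle : P.card ≤ n ^ t * (m - 1) := by
    rw [hP2]
    calc ∑ f : Fin t → Fin n, (univ.filter fun w : Fin n =>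
          Function.Injective f ∧ ∀ i, c (f i) w = true).card
        ≤ ∑ _f : Fin t → Fin n, (m - 1) := Finset.sum_le_sum fun f _ => hbd f
      _ = n ^ t * (m - 1) := by
          rw [Finset.sum_const, Finset.card_univ, smul_eq_mul]
          congr 1
          simp [Fintype.card_fun]
  have hnt0 : 0 < n ^ t := pow_pos hn t
  have hfin : m * n ^ t ≤ n ^ t * (m - 1) := hmainN.trans hle
  rw [mul_comm] at hfin
  have hmm : m ≤ m - 1 := Nat.le_of_mul_le_mul_left hfin hnt0
  exact absurd (hmm.trans_lt (Nat.sub_lt hm one_pos)) (lt_irrefl m)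

/-- Helper for the first two cases of the main theorem: a monochromatic `K_{t,T²}`
(in color `!col`) plus many rows with `T` neighbours of color `col` inside its column
set yields the pattern. -/
lemma case12 {n : ℕ} (c : Fin n → Fin n → Bool) (col : Bool) (t T : ℕ)
    (ht : 0 < t) (hT : t ≤ T)
    (A' Y' : Finset (Fin n)) (hA' : A'.card = t) (hY'card : Y'.card = T ^ 2)
    (hmono : ∀ w ∈ Y', ∀ v ∈ A', c v w = !col)
    (hD : (T + t) * ((T ^ 2).choose T) ≤
      ((Finset.univ.filter fun v : Fin n =>
        T ≤ ((Y'.filter fun y => c v y = col).card)).card)) :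
    hasPattern c T T t := by
  classical
  set D : Finset (Fin n) := Finset.univ.filter fun v : Fin n =>
    T ≤ ((Y'.filter fun y => c v y = col).card) with hDdef
  set F : Fin n → Finset (Fin n) := fun v =>
    if h : T ≤ ((Y'.filter fun y => c v y = col).card) then
      (Finset.exists_subset_card_eq h).choose else ∅ with hF
  have hFprop : ∀ v ∈ D, F v ⊆ (Y'.filter fun y => c v y = col) ∧ (F v).card = T := by
    intro v hv
    rw [hDdef, Finset.mem_filter] at hv
    rw [hF]
    simp only [dif_pos hv.2]
    exact (Finset.exists_subset_card_eq hv.2).choose_spec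
  have hmaps : ∀ v ∈ D, F v ∈ Y'.powersetCard T := by
    intro v hv
    exact Finset.mem_powersetCard.2
      ⟨(hFprop v hv).1.trans (Finset.filter_subset _ _), (hFprop v hv).2⟩
  have hchoosepos : 0 < (T ^ 2).choose T :=
    Nat.choose_pos (by nlinarith)
  have hcard : (Y'.powersetCard T).card * (T + t - 1) < D.card := by
    rw [Finset.card_powersetCard, hY'card]
    calc (T ^ 2).choose T * (T + t - 1) < (T ^ 2).choose T * (T + t) :=
          Nat.mul_lt_mul_of_le_of_lt (le_refl _) (by omega) hchoosepos
      _ = (T + t) * ((T ^ 2).choose T) := mul_comm _ _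
      _ ≤ D.card := hD
  obtain ⟨S, hSmem, hSfib⟩ :=
    Finset.exists_lt_card_fiber_of_mul_lt_card_of_maps_to hmaps hcard
  obtain ⟨hSsub, hScard⟩ := Finset.mem_powersetCard.1 hSmem
  set Fib : Finset (Fin n) := D.filter fun v => F v = S with hFib
  have hFibcard : T + t ≤ Fib.card := by omega
  have hY1 : T ≤ (Fib \ A').card := by
    have := Finset.le_card_sdiff A' Fib
    rw [hA'] at this
    omega
  obtain ⟨Y₁, hY₁sub, hY₁card⟩ := Finset.exists_subset_card_eq hY1
  refine ⟨S, Y₁, A', col, hScard, hY₁card, hA',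
    Finset.disjoint_of_subset_left hY₁sub Finset.sdiff_disjoint, Or.inr ⟨?_, ?_⟩⟩
  · intro x hx y hy
    have hyFib := hY₁sub hy
    rw [Finset.mem_sdiff, hFib, Finset.mem_filter] at hyFib
    obtain ⟨⟨hyD, hyF⟩, -⟩ := hyFib
    have := (hFprop y hyD).1
    rw [hyF] at this
    exact (Finset.mem_filter.1 (this hx)).2
  · intro x hx y hy
    exact hmono x (hSsub hx) y hy
end Aux

/-- Unavoidable patterns in 2-edge colorings of `K_{n,n}`: for every positive integer `t`
and every `T ≥ t`, there are `C > 0` and `N` such that for all `n ≥ N`, any 2-edge coloring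
of `K_{n,n}` with at least `C·n^(2-1/t)` edges in each color class contains a colored copy
of `K_{T,t+T}` in which one color forms a `K_{T,T}`, or a colored copy of `K_{t,2T}` in
which one color forms a `K_{t,T}`. -/
theorem unavoidable_patterns (t T : ℕ) (ht : 0 < t) (hT : t ≤ T) :
    ∃ (C : ℝ) (N : ℕ), 0 < C ∧ 0 < N ∧
      ∀ n : ℕ, N ≤ n → ∀ c : Fin n → Fin n → Bool,
        C * (n : ℝ) ^ ((2 : ℝ) - 1 / (t : ℝ)) ≤ (redTotal c : ℝ) →
        C * (n : ℝ) ^ ((2 : ℝ) - 1 / (t : ℝ)) ≤ (blueTotal c : ℝ) →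
        hasPattern c T T t ∨ hasPattern c t T T := by
  classical
  have hT1 : 0 < T := lt_of_lt_of_le ht hT
  refine ⟨((T ^ 2 + t ^ 2 : ℕ) : ℝ), 2 * ((T + t) * ((T ^ 2).choose T)) + T + 1,
    by positivity, by positivity, ?_⟩
  intro n hn c hred' hblue'
  have hred : ((T ^ 2 + t ^ 2 : ℕ) : ℝ) * (n : ℝ) ^ ((2 : ℝ) - 1 / (t : ℝ)) ≤
      (((Finset.univ.filter fun p : Fin n × Fin n => c p.1 p.2 = true).card : ℕ) : ℝ) := by
    simpa [redTotal] using hred'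
  have hblue : ((T ^ 2 + t ^ 2 : ℕ) : ℝ) * (n : ℝ) ^ ((2 : ℝ) - 1 / (t : ℝ)) ≤
      (((Finset.univ.filter fun p : Fin n × Fin n => c p.1 p.2 = false).card : ℕ) : ℝ) := by
    simpa [blueTotal] using hblue'
  have hn1 : 1 ≤ n := by omega
  have hm1 : 1 ≤ T ^ 2 := by nlinarith
  -- red K_{t,T²}
  obtain ⟨A, hAcard, hAcols⟩ := key_kst t (T ^ 2) ht hm1 n hn1 c hred
  obtain ⟨Y, hYsub, hYcard⟩ := Finset.exists_subset_card_eq hAcols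
  have hYred : ∀ w ∈ Y, ∀ v ∈ A, c v w = true :=
    fun w hw => (Finset.mem_filter.1 (hYsub hw)).2
  -- blue K_{t,T²}
  obtain ⟨A', hA'card, hA'cols⟩ := key_kst t (T ^ 2) ht hm1 n hn1 (fun v w => !c v w) (by
    have heq : (Finset.univ.filter fun p : Fin n × Fin n => (!c p.1 p.2) = true)
        = (Finset.univ.filter fun p : Fin n × Fin n => c p.1 p.2 = false) := by
      refine Finset.filter_congr fun p _ => by simp
    rw [heq]; exact hblue)
  obtain ⟨Y', hY'sub, hY'card⟩ := Finset.exists_subset_card_eq hA'cols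
  have hY'blue : ∀ w ∈ Y', ∀ v ∈ A', c v w = false := fun w hw v hv => by
    have := (Finset.mem_filter.1 (hY'sub hw)).2 v hv
    simpa using this
  left
  set D : Finset (Fin n) := Finset.univ.filter fun v : Fin n =>
    T ≤ ((Y'.filter fun y => c v y = true).card) with hDdef
  set D' : Finset (Fin n) := Finset.univ.filter fun v : Fin n =>
    T ≤ ((Y.filter fun y => c v y = false).card) with hD'def
  by_cases hcase1 : (T + t) * ((T ^ 2).choose T) ≤ D.card
  · exact case12 c true t T ht hT A' Y' hA'card hY'card
      (fun w hw v hv => by simp [hY'blue w hw v hv]) hcase1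
  by_cases hcase2 : (T + t) * ((T ^ 2).choose T) ≤ D'.card
  · exact case12 c false t T ht hT A Y hAcard hYcard
      (fun w hw v hv => by simp [hYred w hw v hv]) hcase2
  -- case 3: many rows that are mostly red on Y and mostly blue on Y'
  push_neg at hcase1 hcase2
  set G : Finset (Fin n) := Finset.univ \ (D ∪ D') with hGdef
  have hGcard : T ≤ G.card := by
    have h1 : (D ∪ D').card ≤ D.card + D'.card := Finset.card_union_le _ _
    have h2 : G.card = n - (D ∪ D').card := by
      rw [hGdef, Finset.card_sdiff_of_subset (Finset.subset_univ _), Finset.card_univ, Fintype.card_fin]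
    omega
  obtain ⟨X, hXsub, hXcard⟩ := Finset.exists_subset_card_eq hGcard
  have hTT : T * (T - 1) + T = T ^ 2 := by
    cases T with
    | zero => omega
    | succ k => simp [Nat.succ_sub_one]; ring
  -- common red columns in Y
  have hcommon : ∀ (Z : Finset (Fin n)) (b : Bool), Z.card = T ^ 2 →
      (∀ x ∈ X, (Z.filter fun y => c x y = !b).card ≤ T - 1) →
      T ≤ (Z.filter fun y => ∀ x ∈ X, c x y = b).card := by
    intro Z b hZcard hsmall
    set R : Finset (Fin n) := Z.filter fun y => ∀ x ∈ X, c x y = b with hR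
    have hcover : Z \ R ⊆ X.biUnion fun x => Z.filter fun y => c x y = !b := by
      intro y hy
      rw [Finset.mem_sdiff, hR, Finset.mem_filter] at hy
      have hyZ := hy.1
      have : ¬ ∀ x ∈ X, c x y = b := fun h => hy.2 ⟨hyZ, h⟩
      push_neg at this
      obtain ⟨x, hx, hxy⟩ := this
      refine Finset.mem_biUnion.2 ⟨x, hx, Finset.mem_filter.2 ⟨hyZ, ?_⟩⟩
      cases b <;> cases hb : c x y <;> simp_all
    have hcover_card : (Z \ R).card ≤ T * (T - 1) := by
      calc (Z \ R).card ≤ (X.biUnion fun x => Z.filter fun y => c x y = !b).card :=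
            Finset.card_le_card hcover
        _ ≤ ∑ x ∈ X, (Z.filter fun y => c x y = !b).card := Finset.card_biUnion_le
        _ ≤ ∑ _x ∈ X, (T - 1) := Finset.sum_le_sum hsmall
        _ = T * (T - 1) := by rw [Finset.sum_const, smul_eq_mul, hXcard]
    have hsdiff : (Z \ R).card = Z.card - R.card :=
      Finset.card_sdiff_of_subset (Finset.filter_subset _ _)
    have hRle : R.card ≤ Z.card := Finset.card_le_card (Finset.filter_subset _ _)
    omega
  have hR1 : T ≤ (Y.filter fun y => ∀ x ∈ X, c x y = true).card := by
    refine hcommon Y true hYcard fun x hx => ?_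
    have hxG := hXsub hx
    rw [hGdef, Finset.mem_sdiff, Finset.mem_union] at hxG
    have : x ∉ D' := fun h => hxG.2 (Or.inr h)
    rw [hD'def, Finset.mem_filter] at this
    simp only [Finset.mem_univ, true_and, not_le] at this
    simpa using Nat.le_pred_of_lt this
  have hR2 : t ≤ (Y'.filter fun y => ∀ x ∈ X, c x y = false).card := by
    refine le_trans hT (hcommon Y' false hY'card fun x hx => ?_)
    have hxG := hXsub hx
    rw [hGdef, Finset.mem_sdiff, Finset.mem_union] at hxG
    have : x ∉ D := fun h => hxG.2 (Or.inl h)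
    rw [hDdef, Finset.mem_filter] at this
    simp only [Finset.mem_univ, true_and, not_le] at this
    simpa using Nat.le_pred_of_lt this
  obtain ⟨Y₁, hY₁sub, hY₁card⟩ := Finset.exists_subset_card_eq hR1
  obtain ⟨Y₂, hY₂sub, hY₂card⟩ := Finset.exists_subset_card_eq hR2
  have hXne : X.Nonempty := Finset.card_pos.1 (by omega)
  obtain ⟨x₀, hx₀⟩ := hXne
  refine ⟨X, Y₁, Y₂, true, hXcard, hY₁card, hY₂card, ?_, Or.inl ⟨?_, ?_⟩⟩
  · rw [Finset.disjoint_left]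
    intro y hy1 hy2
    have h1 := (Finset.mem_filter.1 (hY₁sub hy1)).2 x₀ hx₀
    have h2 := (Finset.mem_filter.1 (hY₂sub hy2)).2 x₀ hx₀
    rw [h1] at h2
    exact Bool.noConfusion h2
  · exact fun x hx y hy => (Finset.mem_filter.1 (hY₁sub hy)).2 x hx
  · intro x hx y hy
    have := (Finset.mem_filter.1 (hY₂sub hy)).2 x hx
    simpa using this
end

section
/- Let t be a positive integer. There exist a constant C > 0 and a positive integer N such that for every n ≥ N, every 2-edge coloring E(K_{n,n}) = R ⊔ B with at least C·n^{2−1/t} edges in each color class contains a set X of t vertices in one part of K_{n,n} and disjoint sets Y₁, Y₂ each of t vertices in the other part, together with a color c ∈ {red, blue}, such that every edge between X and Y₁ has color c and every edge between X and Y₂ has the other color (a colored copy of K_{t,2t} in which one color forms a K_{t,t}). -/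
/-!
Kővári–Sós–Turán counting: if a bipartite graph between two `n`-sets has `K n^(2-1/t)` edges, then
double counting `∑_v C(deg v, t)` over the `t`-subsets of the other side produces `t` vertices with
at least `(K/2)^t` common neighbours. For the red edges this gives a red `K_{t,ℓ}` between `U` and
`L` with `ℓ ≥ 4t²`. If some `t` vertices of `L` have `t` common blue neighbours, these together with
`U` form the pattern. Otherwise the same double count shows that at most `(t-1)(4t)^t` vertices have
`ℓ/(2t)` or more blue neighbours in `L`. Deleting them costs at most half of the blue edges, so the
counting yields `t` vertices `U'` with `t` common blue neighbours; as each vertex of `U'` has fewer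
than `ℓ/(2t)` blue neighbours in `L`, at least `ℓ/2 ≥ t` vertices of `L` are red to all of `U'`.
-/

open Finset
open scoped Nat

theorem Nat.pow_sub_le_factorial_mul_choose (n k : ℕ) : (n + 1 - k) ^ k ≤ k ! * n.choose k :=
  (pow_sub_le_descFactorial n k).trans_eq (descFactorial_eq_factorial_mul_choose n k)

theorem Nat.factorial_mul_choose_le_pow (n k : ℕ) : k ! * n.choose k ≤ n ^ k :=
  (descFactorial_eq_factorial_mul_choose n k).symm.trans_le (descFactorial_le_pow n k)

section
variable {α β : Type*} [Fintype α] [DecidableEq β]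

theorem sum_choose_card_eq_sum_card_supset (t : ℕ) (Q : Finset β) (N : α → Finset β)
    (hN : ∀ v, N v ⊆ Q) :
    ∑ v, (#(N v)).choose t = ∑ U ∈ Q.powersetCard t, #{v | U ⊆ N v} := by
  have hsubsets : ∀ v, {U ∈ Q.powersetCard t | U ⊆ N v} = (N v).powersetCard t := fun v => by
    ext U
    simp only [mem_filter, mem_powersetCard]
    exact ⟨fun h => ⟨h.2, h.1.2⟩, fun h => ⟨⟨h.1.trans (hN v), h.2⟩, h.1⟩⟩
  simp_rw [← card_powersetCard, ← hsubsets]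
  exact sum_card_bipartiteAbove_eq_sum_card_bipartiteBelow _

theorem card_mul_pow_le_factorial_mul_sum_choose {t : ℕ} (ht : 0 < t) (d : α → ℕ) {A : ℝ}
    (hA : 2 * t ≤ A) (hd : A * Fintype.card α ≤ ∑ v, (d v : ℝ)) :
    Fintype.card α * (A / 2) ^ t ≤ t ! * ∑ v, ((d v).choose t : ℝ) := by
  obtain ⟨k, rfl⟩ : ∃ k, t = k + 1 := ⟨t - 1, by omega⟩
  -- `(d + 1 - t)^t ≤ t! C(d, t)` trades binomials for powers, to which the power mean applies.
  obtain ⟨e, he⟩ : ∃ e : α → ℕ, ∀ v, e v = d v + 1 - (k + 1) := ⟨_, fun _ => rfl⟩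
  rcases Nat.eq_zero_or_pos (Fintype.card α) with hm | hm
  · simp only [hm, CharP.cast_eq_zero, zero_mul]; positivity
  set m := (Fintype.card α : ℝ)
  have hm' : (0 : ℝ) < m := Nat.cast_pos.mpr hm
  have hsum : A / 2 * m ≤ ∑ v, (e v : ℝ) := by
    have hde : ∀ v, (d v : ℝ) ≤ e v + (k + 1 : ℕ) := fun v => by
      exact_mod_cast (by rw [he]; omega : d v ≤ e v + (k + 1))
    have := sum_le_sum fun v (_ : v ∈ univ) => hde v
    rw [sum_add_distrib, sum_const, card_univ, nsmul_eq_mul] at this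
    push_cast at this hA
    nlinarith
  have hdesc : ∀ v, (e v : ℝ) ^ (k + 1) ≤ (k + 1)! * ((d v).choose (k + 1) : ℝ) := fun v => by
    exact_mod_cast he v ▸ Nat.pow_sub_le_factorial_mul_choose (d v) (k + 1)
  refine le_of_mul_le_mul_left ?_ (pow_pos hm' k)
  calc m ^ k * (m * (A / 2) ^ (k + 1)) = (A / 2 * m) ^ (k + 1) := by ring
    _ ≤ (∑ v, (e v : ℝ)) ^ (k + 1) := by
      gcongr; push_cast at hA; exact mul_nonneg (by linarith) hm'.le
    _ ≤ m ^ k * ∑ v, (e v : ℝ) ^ (k + 1) :=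
      pow_sum_le_card_mul_sum_pow (fun _ _ => by positivity) k
    _ ≤ m ^ k * ((k + 1)! * ∑ v, ((d v).choose (k + 1) : ℝ)) := by
      gcongr m ^ k * ?_
      rw [mul_sum]
      exact sum_le_sum fun v _ => hdesc v

theorem exists_card_supset_mul_pow_ge {t : ℕ} (ht : 0 < t) {Q : Finset β} (hQ : t ≤ #Q)
    (N : α → Finset β) (hN : ∀ v, N v ⊆ Q) {A : ℝ} (hA : 2 * t ≤ A)
    (hd : A * Fintype.card α ≤ ∑ v, (#(N v) : ℝ)) :
    ∃ U ⊆ Q, #U = t ∧ Fintype.card α * (A / 2) ^ t ≤ #{v | U ⊆ N v} * #Q ^ t := by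
  obtain ⟨U, hU, hmax⟩ := exists_max_image (Q.powersetCard t) (fun U => #{v | U ⊆ N v})
    (powersetCard_nonempty.mpr hQ)
  refine ⟨U, (mem_powersetCard.1 hU).1, (mem_powersetCard.1 hU).2, ?_⟩
  have hcount : t ! * ∑ v, (#(N v)).choose t ≤ #{v | U ⊆ N v} * #Q ^ t :=
    calc t ! * ∑ v, (#(N v)).choose t
        = t ! * ∑ V ∈ Q.powersetCard t, #{v | V ⊆ N v} := by
          rw [sum_choose_card_eq_sum_card_supset t Q N hN]
      _ ≤ t ! * ((#Q).choose t * #{v | U ⊆ N v}) := by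
          gcongr
          simpa only [card_powersetCard, smul_eq_mul] using sum_le_card_nsmul _ _ _ hmax
      _ = #{v | U ⊆ N v} * (t ! * (#Q).choose t) := by ring
      _ ≤ #{v | U ⊆ N v} * #Q ^ t := by gcongr; exact Nat.factorial_mul_choose_le_pow _ _
  calc (Fintype.card α : ℝ) * (A / 2) ^ t ≤ t ! * ∑ v, ((#(N v)).choose t : ℝ) :=
        card_mul_pow_le_factorial_mul_sum_choose ht _ hA hd
    _ ≤ #{v | U ⊆ N v} * #Q ^ t := by exact_mod_cast hcount

theorem card_rich_mul_pow_le {t : ℕ} {L : Finset β} (N : α → Finset β) (hN : ∀ v, N v ⊆ L)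
    (hfew : ∀ V ∈ L.powersetCard t, #{v | V ⊆ N v} < t) (s : ℕ) :
    #{v | s ≤ #(N v)} * (s + 1 - t) ^ t ≤ (t - 1) * #L ^ t := by
  have hchoose : #{v | s ≤ #(N v)} * s.choose t ≤ (#L).choose t * (t - 1) :=
    calc #{v | s ≤ #(N v)} * s.choose t = ∑ v with s ≤ #(N v), s.choose t := by
          rw [sum_const, smul_eq_mul]
      _ ≤ ∑ v with s ≤ #(N v), (#(N v)).choose t :=
          sum_le_sum fun v hv => Nat.choose_le_choose t (mem_filter.1 hv).2
      _ ≤ ∑ v, (#(N v)).choose t := sum_le_sum_of_subset (subset_univ _)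
      _ = ∑ V ∈ L.powersetCard t, #{v | V ⊆ N v} := sum_choose_card_eq_sum_card_supset t L N hN
      _ ≤ (#L).choose t * (t - 1) := by
          simpa only [card_powersetCard, smul_eq_mul] using
            sum_le_card_nsmul _ _ _ fun V hV => Nat.le_sub_one_of_lt (hfew V hV)
  calc #{v | s ≤ #(N v)} * (s + 1 - t) ^ t
      ≤ #{v | s ≤ #(N v)} * (t ! * s.choose t) := by
        gcongr; exact Nat.pow_sub_le_factorial_mul_choose s t
    _ = t ! * (#{v | s ≤ #(N v)} * s.choose t) := by ring
    _ ≤ t ! * ((#L).choose t * (t - 1)) := by gcongr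
    _ = (t - 1) * (t ! * (#L).choose t) := by ring
    _ ≤ (t - 1) * #L ^ t := by gcongr; exact Nat.factorial_mul_choose_le_pow _ _

theorem card_rich_le {t : ℕ} (ht : 0 < t) {L : Finset β} (hL : 4 * t ^ 2 ≤ #L)
    (N : α → Finset β) (hN : ∀ v, N v ⊆ L)
    (hfew : ∀ V ∈ L.powersetCard t, #{v | V ⊆ N v} < t) :
    #{v | #L / (2 * t) ≤ #(N v)} ≤ (t - 1) * (4 * t) ^ t := by
  set s := #L / (2 * t)
  have hs : 2 * t ≤ s := (Nat.le_div_iff_mul_le (by omega)).2 (by nlinarith)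
  have hLs : #L ≤ 4 * t * (s + 1 - t) := by
    obtain ⟨u, hu⟩ : ∃ u, s + 1 = u + t ∧ t < u := ⟨s + 1 - t, by omega, by omega⟩
    have hlt : #L < 2 * t * (s + 1) := Nat.lt_mul_div_succ #L (show 0 < 2 * t by omega)
    rw [hu.1] at hlt
    rw [hu.1, Nat.add_sub_cancel]
    nlinarith [hu.2]
  have := card_rich_mul_pow_le N hN hfew s
  refine Nat.le_of_mul_le_mul_right (c := (s + 1 - t) ^ t) ?_ (pow_pos (by omega) t)
  calc _ ≤ (t - 1) * #L ^ t := this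
    _ ≤ (t - 1) * (4 * t * (s + 1 - t)) ^ t := by gcongr
    _ = _ := by ring

theorem sum_card_le_sum_card_sdiff_add (N : α → Finset β) (B : Finset β) :
    ∑ v, #(N v) ≤ ∑ v, #(N v \ B) + Fintype.card α * #B := by
  calc ∑ v, #(N v) ≤ ∑ v, (#(N v \ B) + #B) := sum_le_sum fun v _ => card_le_card_sdiff_add_card
    _ = _ := by rw [sum_add_distrib, sum_const, card_univ, smul_eq_mul]
end

theorem rpow_one_sub_inv_pow_mul_self {x : ℝ} (hx : 0 < x) {t : ℕ} (ht : 0 < t) :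
    (x ^ (1 - 1 / t : ℝ)) ^ t * x = x ^ t := by
  rw [← Real.rpow_natCast, ← Real.rpow_mul hx.le, ← Real.rpow_add_one hx.ne', ← Real.rpow_natCast]
  congr 1
  field_simp
  ring

theorem rpow_two_sub_inv {x : ℝ} (hx : 0 < x) (t : ℕ) :
    x ^ (2 - 1 / t : ℝ) = x ^ (1 - 1 / t : ℝ) * x := by
  rw [← Real.rpow_add_one hx.ne']
  ring_nf

theorem exists_card_supset_ge_of_le_sum {n t : ℕ} (ht : 0 < t) {Q : Finset (Fin n)}
    (hQ : t ≤ #Q) (N : Fin n → Finset (Fin n)) (hN : ∀ v, N v ⊆ Q) {K : ℝ} (hK : 2 * t ≤ K)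
    (hd : K * n ^ (2 - 1 / t : ℝ) ≤ ∑ v, (#(N v) : ℝ)) :
    ∃ U ⊆ Q, #U = t ∧ (K / 2) ^ t ≤ #{v | U ⊆ N v} := by
  have hQn : #Q ≤ n := (card_le_univ Q).trans_eq (Fintype.card_fin n)
  have hn : (0 : ℝ) < n := by exact_mod_cast (show 0 < n by omega)
  set y := (n : ℝ) ^ (1 - 1 / t : ℝ)
  have hy : 1 ≤ y := Real.one_le_rpow (by exact_mod_cast (show 0 < n by omega))
    (sub_nonneg.2 (div_le_one_of_le₀ (by exact_mod_cast ht) (by positivity)))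
  obtain ⟨U, hUQ, hU, hcount⟩ := exists_card_supset_mul_pow_ge ht hQ N hN (A := K * y)
    (by nlinarith [(by positivity : (0 : ℝ) ≤ t)])
    (by rwa [Fintype.card_fin, mul_assoc, ← rpow_two_sub_inv hn])
  rw [Fintype.card_fin] at hcount
  refine ⟨U, hUQ, hU, le_of_mul_le_mul_right ?_ (pow_pos hn t)⟩
  calc (K / 2) ^ t * n ^ t = n * (K * y / 2) ^ t := by
        rw [← rpow_one_sub_inv_pow_mul_self hn ht]; ring
    _ ≤ #{v | U ⊆ N v} * #Q ^ t := hcount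
    _ ≤ #{v | U ⊆ N v} * n ^ t := by gcongr

theorem half_le_sum_card_sdiff {n t : ℕ} (hn : 0 < n) (N : Fin n → Finset (Fin n))
    (B : Finset (Fin n)) {K : ℝ} (hB : 2 * #B ≤ K)
    (hd : K * n ^ (2 - 1 / t : ℝ) ≤ ∑ v, (#(N v) : ℝ)) :
    K / 2 * n ^ (2 - 1 / t : ℝ) ≤ ∑ v, (#(N v \ B) : ℝ) := by
  have hsplit : ∑ v, (#(N v) : ℝ) ≤ ∑ v, (#(N v \ B) : ℝ) + n * #B := by
    exact_mod_cast Fintype.card_fin n ▸ sum_card_le_sum_card_sdiff_add N B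
  have hn1 : (1 : ℝ) ≤ n := by exact_mod_cast hn
  have hrpow : (n : ℝ) ≤ n ^ (2 - 1 / t : ℝ) := Real.self_le_rpow_of_one_le hn1 (by
    rcases Nat.eq_zero_or_pos t with rfl | ht
    · simp
    · linarith [div_le_one_of_le₀ (by exact_mod_cast ht : (1 : ℝ) ≤ t) (by positivity)])
  nlinarith [(by positivity : (0 : ℝ) ≤ #B)]

theorem Nat.le_sub_mul_div_two_mul {t ℓ : ℕ} (h : 4 * t ^ 2 ≤ ℓ) : t ≤ ℓ - t * (ℓ / (2 * t)) := by
  have hdiv : 2 * (t * (ℓ / (2 * t))) ≤ ℓ := by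
    rw [← mul_assoc]; exact Nat.mul_div_le ℓ (2 * t)
  have ht2 : t ≤ t ^ 2 := Nat.le_self_pow two_ne_zero t
  generalize t * (ℓ / (2 * t)) = p at hdiv ⊢
  omega

section Coloring
variable {n : ℕ}

theorem card_filter_color_eq_sum (c : Fin n → Fin n → Bool) (b : Bool) :
    #{p : Fin n × Fin n | c p.1 p.2 = b} = ∑ v, #{w | c v w = b} := by
  rw [card_filter, Fintype.sum_prod_type]
  simp only [card_filter]

theorem hasPattern_of_forall {c : Fin n → Fin n → Bool} {X Y₁ Y₂ : Finset (Fin n)}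
    {a b₁ b₂ : ℕ} (col : Bool) (ha : 0 < a) (hX : #X = a) (hY₁ : #Y₁ = b₁) (hY₂ : #Y₂ = b₂)
    (h₁ : ∀ x ∈ X, ∀ y ∈ Y₁, c x y = col) (h₂ : ∀ x ∈ X, ∀ y ∈ Y₂, c x y = !col) :
    hasPattern c a b₁ b₂ := by
  obtain ⟨x, hx⟩ := card_pos.mp (hX ▸ ha)
  refine ⟨X, Y₁, Y₂, col, hX, hY₁, hY₂, disjoint_left.mpr fun y hy₁ hy₂ => ?_, .inl ⟨h₁, h₂⟩⟩
  simpa using (h₁ x hx y hy₁).symm.trans (h₂ x hx y hy₂)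

theorem hasPattern_of_transpose {c : Fin n → Fin n → Bool} {a b₁ b₂ : ℕ}
    (h : hasPattern (fun w v => c v w) a b₁ b₂) : hasPattern c a b₁ b₂ := by
  obtain ⟨X, Y₁, Y₂, col, hX, hY₁, hY₂, hdisj, hcol⟩ := h
  exact ⟨X, Y₁, Y₂, col, hX, hY₁, hY₂, hdisj, hcol.symm⟩

theorem hasPattern_of_forall_card_common_blue_lt {t : ℕ} (ht : 0 < t) {c : Fin n → Fin n → Bool}
    {L : Finset (Fin n)} (hL : 4 * t ^ 2 ≤ #L)
    (hfew : ∀ V ∈ L.powersetCard t, #{w | ∀ v ∈ V, c v w = false} < t) {K : ℝ}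
    (hK : 4 * t ≤ K) (hK' : 2 * ((t - 1) * (4 * t) ^ t : ℕ) ≤ K)
    (hn : (t - 1) * (4 * t) ^ t + t ≤ n) (hblue : K * n ^ (2 - 1 / t : ℝ) ≤ blueTotal c) :
    hasPattern c t t t := by
  set N : Fin n → Finset (Fin n) := fun w => {v ∈ L | c v w = false}
  set Bad : Finset (Fin n) := {w | #L / (2 * t) ≤ #(N w)}
  have hBad : #Bad ≤ (t - 1) * (4 * t) ^ t := by
    refine card_rich_le ht hL N (fun _ => filter_subset _ _) fun V hV => ?_
    convert hfew V hV using 3 with w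
    simp only [N, subset_iff, mem_filter]
    exact ⟨fun h v hv => (h hv).2, fun h v hv => ⟨(mem_powersetCard.1 hV).1 hv, h v hv⟩⟩
  set N' : Fin n → Finset (Fin n) := fun v => ({w | c v w = false} : Finset (Fin n)) \ Bad
  have hsum : K / 2 * n ^ (2 - 1 / t : ℝ) ≤ ∑ v, (#(N' v) : ℝ) := by
    refine half_le_sum_card_sdiff (by omega) _ Bad ?_ ?_
    · have : (#Bad : ℝ) ≤ ((t - 1) * (4 * t) ^ t : ℕ) := by exact_mod_cast hBad
      linarith
    · rw [blueTotal, card_filter_color_eq_sum] at hblue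
      exact_mod_cast hblue
  obtain ⟨U, hUBad, hU, hY₁⟩ := exists_card_supset_ge_of_le_sum ht (Q := Badᶜ)
    (by rw [card_compl, Fintype.card_fin]; omega) N'
    (fun v => by simp only [N', sdiff_eq_inter_compl]; exact inter_subset_right) (by linarith)
    hsum
  have hY₁' : t ≤ #{v | U ⊆ N' v} := by
    have : (t : ℝ) ≤ (K / 2 / 2) ^ t :=
      calc (t : ℝ) ≤ K / 4 := by linarith
        _ ≤ (K / 4) ^ t := le_self_pow₀ (by linarith [(by exact_mod_cast ht : (1 : ℝ) ≤ t)]) ht.ne'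
        _ = (K / 2 / 2) ^ t := by ring
    exact_mod_cast this.trans hY₁
  obtain ⟨Y₁, hY₁sub, hY₁card⟩ := exists_subset_card_eq hY₁'
  have hY₂ : t ≤ #(L \ U.biUnion N) := by
    have hunion := card_biUnion_le_card_mul U N (#L / (2 * t)) fun w hw => by
      have : w ∉ Bad := mem_compl.1 (hUBad hw)
      simp only [Bad, mem_filter, mem_univ, true_and, not_le] at this
      exact this.le
    rw [hU] at hunion
    exact (Nat.le_sub_mul_div_two_mul hL).trans
      ((Nat.sub_le_sub_left hunion _).trans (le_card_sdiff _ _))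
  obtain ⟨Y₂, hY₂sub, hY₂card⟩ := exists_subset_card_eq hY₂
  refine hasPattern_of_transpose (hasPattern_of_forall false ht hU hY₁card hY₂card
    (fun w hw v hv => ?_) (fun w hw v hv => ?_))
  · have := (mem_filter.1 (hY₁sub hv)).2 hw
    simp only [N', mem_sdiff, mem_filter, mem_univ, true_and] at this
    exact this.1
  · have := hY₂sub hv
    simp only [N, mem_sdiff, mem_biUnion, mem_filter, not_exists, not_and] at this
    simpa using this.2 w hw this.1

theorem hasPattern_of_le_redTotal_of_le_blueTotal {t : ℕ} (ht : 0 < t) {K : ℝ}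
    (hK : 8 * t ^ 2 ≤ K) (hK' : 2 * ((t - 1) * (4 * t) ^ t : ℕ) ≤ K)
    (hn : (t - 1) * (4 * t) ^ t + t ≤ n) {c : Fin n → Fin n → Bool}
    (hred : K * n ^ (2 - 1 / t : ℝ) ≤ redTotal c) (hblue : K * n ^ (2 - 1 / t : ℝ) ≤ blueTotal c) :
    hasPattern c t t t := by
  have ht1 : (1 : ℝ) ≤ t := by exact_mod_cast ht
  obtain ⟨U, -, hU, hL⟩ := exists_card_supset_ge_of_le_sum ht (Q := univ)
    (by rw [card_univ, Fintype.card_fin]; omega) (fun v => {w | c v w = true})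
    (fun _ => subset_univ _) (K := K) (by nlinarith)
    (by rw [redTotal, card_filter_color_eq_sum] at hred; exact_mod_cast hred)
  set L : Finset (Fin n) := {v | U ⊆ ({w | c v w = true} : Finset (Fin n))}
  have hL' : 4 * t ^ 2 ≤ #L := by
    have : ((4 * t ^ 2 : ℕ) : ℝ) ≤ (K / 2) ^ t :=
      calc _ ≤ K / 2 := by push_cast; linarith
        _ ≤ (K / 2) ^ t := le_self_pow₀ (by nlinarith) ht.ne'
    exact_mod_cast this.trans hL
  by_cases hrich : ∃ V ∈ L.powersetCard t, t ≤ #{w | ∀ v ∈ V, c v w = false}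
  · obtain ⟨V, hV, hY⟩ := hrich
    obtain ⟨Y, hYsub, hYcard⟩ := exists_subset_card_eq hY
    rw [mem_powersetCard] at hV
    refine hasPattern_of_forall false ht hV.2 hYcard hU
      (fun v hv w hw => (mem_filter.1 (hYsub hw)).2 v hv) fun v hv w hw => ?_
    simpa using (mem_filter.1 (hV.1 hv)).2 hw
  · push Not at hrich
    exact hasPattern_of_forall_card_common_blue_lt ht hL' hrich (by nlinarith) hK' hn hblue
end Coloring

/-- For every positive integer `t` there are `C > 0` and `N` such that for all `n ≥ N`,
any 2-edge coloring of `K_{n,n}` with at least `C·n^(2-1/t)` edges in each color class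
contains a colored copy of `K_{t,2t}` in which one color forms a `K_{t,t}`: a set `X` of
`t` vertices in one part and disjoint sets `Y₁, Y₂` of `t` vertices each in the other part
such that all `X`–`Y₁` edges get one color and all `X`–`Y₂` edges get the other color. -/
theorem unavoidable_pattern_Ktt (t : ℕ) (ht : 0 < t) :
    ∃ (C : ℝ) (N : ℕ), 0 < C ∧ 0 < N ∧
      ∀ n : ℕ, N ≤ n → ∀ c : Fin n → Fin n → Bool,
        C * (n : ℝ) ^ ((2 : ℝ) - 1 / (t : ℝ)) ≤ (redTotal c : ℝ) →
        C * (n : ℝ) ^ ((2 : ℝ) - 1 / (t : ℝ)) ≤ (blueTotal c : ℝ) →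
        hasPattern c t t t := by
  refine ⟨8 * t ^ 2 + 2 * ((t - 1) * (4 * t) ^ t : ℕ), (t - 1) * (4 * t) ^ t + t,
    by positivity, by omega, fun n hn c hred hblue => ?_⟩
  exact hasPattern_of_le_redTotal_of_le_blueTotal ht (le_add_of_nonneg_right (by positivity))
    (le_add_of_nonneg_left (by positivity)) hn hred hblue
end

section
/- Let G be a bipartite graph with a fixed bipartition V(G) = X_G ⊔ Y_G and with m edges, and let r be an integer with 0 ≤ r ≤ ⌊m/2⌋. Suppose there exists a set U ⊆ X_G such that exactly r edges of G are incident to a vertex of U. Then there exists a positive integer N such that for every n ≥ N there is an integer z < n²/2 with the property that every 2-edge coloring E(K_{n,n}) = R ⊔ B with more than z edges in each color class contains a copy of G having exactly r edges in one of the two colors and m − r edges in the other color. -/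
/-- `redB c u v = true` iff `u` and `v` lie in different parts of `K_{n,n}` and the edge
between them is red (under the coloring `c : Fin n → Fin n → Bool`, where `c v w = true`
means the edge between vertex `v` of the first part and `w` of the second part is red). -/
def redB {n : ℕ} (c : Fin n → Fin n → Bool) : Fin n ⊕ Fin n → Fin n ⊕ Fin n → Bool
  | Sum.inl v, Sum.inr w => c v w
  | Sum.inr w, Sum.inl v => c v w
  | _, _ => false

/-- `blueB c u v = true` iff `u` and `v` lie in different parts of `K_{n,n}` and the edge
between them is blue. -/
def blueB {n : ℕ} (c : Fin n → Fin n → Bool) : Fin n ⊕ Fin n → Fin n ⊕ Fin n → Bool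
  | Sum.inl v, Sum.inr w => !c v w
  | Sum.inr w, Sum.inl v => !c v w
  | _, _ => false

/-- `crossB u v = true` iff `u` and `v` lie in different parts of `K_{n,n}`,
i.e. `u v` is an edge of `K_{n,n}`. -/
def crossB {n : ℕ} : Fin n ⊕ Fin n → Fin n ⊕ Fin n → Bool
  | Sum.inl _, Sum.inr _ => true
  | Sum.inr _, Sum.inl _ => true
  | _, _ => false

/-- A bipartite graph `G` with fixed bipartition is encoded by its two parts `α`, `β`
and its edge set `E : Finset (α × β)`.  `IsCopy E f` says that `f` realizes a copy of `G`
in `K_{n,n}` (a subgraph of `K_{n,n}` isomorphic to `G`): `f` is an injective map from the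
vertices of `G` to the vertices of `K_{n,n}` sending every edge of `G` to an edge of
`K_{n,n}`. -/
def IsCopy {n : ℕ} {α β : Type*} (E : Finset (α × β)) (f : α ⊕ β → Fin n ⊕ Fin n) : Prop :=
  Function.Injective f ∧ ∀ p ∈ E, crossB (f (Sum.inl p.1)) (f (Sum.inr p.2)) = true

/-- The number of red edges of the copy of the bipartite graph with edge set `E`
realized by `f` in `K_{n,n}` colored by `c`. -/
def edgeRedCount {n : ℕ} {α β : Type*} (c : Fin n → Fin n → Bool)
    (E : Finset (α × β)) (f : α ⊕ β → Fin n ⊕ Fin n) : ℕ :=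
  (E.filter fun p => redB c (f (Sum.inl p.1)) (f (Sum.inr p.2)) = true).card

/-- The number of blue edges of the copy of the bipartite graph with edge set `E`
realized by `f` in `K_{n,n}` colored by `c`. -/
def edgeBlueCount {n : ℕ} {α β : Type*} (c : Fin n → Fin n → Bool)
    (E : Finset (α × β)) (f : α ⊕ β → Fin n ⊕ Fin n) : ℕ :=
  (E.filter fun p => blueB c (f (Sum.inl p.1)) (f (Sum.inr p.2)) = true).card

/-! If both colour classes have more than `⌊n/2⌋²` edges, a Kővári–Sós–Turán count (at least
`n/16` rows have red degree `≥ n/8`, and then red `K_{1,t}`'s are too many for each `t`-set of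
columns to lie in fewer than `t` red neighbourhoods) gives a red `K_{t,t}` on `Rr × Cr` and a blue
`K_{t,t}` on `Rb × Cb`. By pigeonhole on column patterns, `Rr × Cb` contains a monochromatic
`K_{s,s}` with `s = max |X_G| |Y_G|`. If it is red, further rows of `Rb` give rows `A₁ ⊔ A₂` and
columns `B` with `A₁ × B` red and `A₂ × B` blue; if it is blue, the same holds after transposing,
using further columns of `Cr`. Embedding `U` into `A₁`, `X_G \ U` into `A₂` and `Y_G` into `B`
gives a copy of `G` whose red edges are exactly the `r` edges at `U`. -/

open Finset Function

lemma sum_choose_card_le_of_card_filter_lt {ι κ : Type*} [Fintype κ] [DecidableEq κ]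
    (s : Finset ι) (N : ι → Finset κ) {t : ℕ}
    (h : ∀ T : Finset κ, #T = t → #{i ∈ s | T ⊆ N i} < t) :
    ∑ i ∈ s, (#(N i)).choose t ≤ (t - 1) * (Fintype.card κ).choose t := by
  let contains : ι → Finset κ → Prop := fun i T => T ⊆ N i
  calc ∑ i ∈ s, (#(N i)).choose t
      = ∑ i ∈ s, #((univ.powersetCard t).bipartiteAbove contains i) := by
        refine sum_congr rfl fun i _ => ?_
        rw [← card_powersetCard]
        congr 1
        ext T
        simp [contains, bipartiteAbove, mem_powersetCard, and_comm]
    _ = ∑ T ∈ univ.powersetCard t, #(s.bipartiteBelow contains T) :=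
        sum_card_bipartiteAbove_eq_sum_card_bipartiteBelow _
    _ ≤ ∑ _T ∈ univ.powersetCard t, (t - 1) :=
        sum_le_sum fun T hT => Nat.le_sub_one_of_lt (h T (mem_powersetCard.1 hT).2)
    _ = (t - 1) * (Fintype.card κ).choose t := by simp [mul_comm]

lemma div_sixteen_le_card_filter_div_eight_le {n : ℕ} (d : Fin n → ℕ) (hd : ∀ i, d i ≤ n)
    (h : (n / 2) ^ 2 < ∑ i, d i) : n / 16 ≤ #{i | n / 8 ≤ d i} := by
  set D := #{i | n / 8 ≤ d i}
  have hsum : ∑ i, d i ≤ D * n + n * (n / 8) := by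
    rw [← sum_filter_add_sum_filter_not univ (fun i => n / 8 ≤ d i)]
    gcongr
    · simpa using sum_le_card_nsmul _ _ _ fun i _ => hd i
    · calc ∑ i ∈ {i : Fin n | ¬n / 8 ≤ d i}, d i ≤ #{i | ¬n / 8 ≤ d i} * (n / 8) := by
            simpa using sum_le_card_nsmul {i : Fin n | ¬n / 8 ≤ d i} d (n / 8)
              fun i hi => (not_le.1 (mem_filter.1 hi).2).le
        _ ≤ n * (n / 8) := by
            gcongr
            simpa using card_filter_le (univ : Finset (Fin n)) _
  by_contra! hD
  have h2 : n ≤ 2 * (n / 2) + 1 := by omega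
  have h8 : 8 * (n / 8) ≤ n := Nat.mul_div_le n 8
  have h16 : 16 * (D + 1) ≤ n := by omega
  nlinarith

lemma sub_one_mul_choose_lt_mul_choose {n t D : ℕ} (hn : t * 31 ^ t < n / 16)
    (hD : n / 16 ≤ D) : (t - 1) * n.choose t < D * (n / 8).choose t := by
  set k := n / 16
  have htk : (t - 1) * 31 ^ t < k :=
    (Nat.mul_le_mul_right _ (Nat.sub_le t 1)).trans_lt hn
  have ht : t ≤ t * 31 ^ t := Nat.le_mul_of_pos_right t (by positivity)
  have hnk : n ≤ 31 * k := by omega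
  have hk : k ≤ n / 8 + 1 - t := by omega
  rw [← Nat.mul_lt_mul_left (Nat.factorial_pos t)]
  calc t.factorial * ((t - 1) * n.choose t) = (t - 1) * n.descFactorial t := by
        rw [Nat.descFactorial_eq_factorial_mul_choose]; ring
    _ ≤ (t - 1) * (31 * k) ^ t := by
        gcongr
        exact (Nat.descFactorial_le_pow n t).trans (Nat.pow_le_pow_left hnk t)
    _ = (t - 1) * 31 ^ t * k ^ t := by ring
    _ < k * k ^ t := Nat.mul_lt_mul_of_pos_right htk (pow_pos (by omega) t)
    _ ≤ D * (n / 8 + 1 - t) ^ t := by gcongr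
    _ ≤ D * (n / 8).descFactorial t := by gcongr; exact Nat.pow_sub_le_descFactorial _ _
    _ = t.factorial * (D * (n / 8).choose t) := by
        rw [Nat.descFactorial_eq_factorial_mul_choose]; ring

lemma card_eq_sum_card_row {n : ℕ} (S : Finset (Fin n × Fin n)) :
    #S = ∑ i, #{j | (i, j) ∈ S} := by
  simp_rw [card_filter]
  rw [← Fintype.sum_prod_type', ← card_filter, filter_univ_mem]

theorem exists_prod_subset_of_sq_half_lt_card {n t : ℕ} (S : Finset (Fin n × Fin n))
    (hn : t * 31 ^ t < n / 16) (hS : (n / 2) ^ 2 < #S) :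
    ∃ R C : Finset (Fin n), #R = t ∧ #C = t ∧ R ×ˢ C ⊆ S := by
  by_contra! hfree
  let N : Fin n → Finset (Fin n) := fun i => {j | (i, j) ∈ S}
  have hfiber : ∀ T : Finset (Fin n), #T = t → #{i ∈ univ | T ⊆ N i} < t := by
    intro T hT
    by_contra! hle
    obtain ⟨R, hR, hRt⟩ := exists_subset_card_eq hle
    refine hfree R T hRt hT fun p hp => ?_
    obtain ⟨hp₁, hp₂⟩ := mem_product.1 hp
    simpa [N] using (mem_filter.1 (hR hp₁)).2 hp₂
  have hheavy := div_sixteen_le_card_filter_div_eight_le (fun i => #(N i))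
    (fun i => by simpa using card_le_univ (N i)) (card_eq_sum_card_row S ▸ hS)
  have hupper := sum_choose_card_le_of_card_filter_lt univ N hfiber
  rw [Fintype.card_fin] at hupper
  refine (sub_one_mul_choose_lt_mul_choose hn hheavy).not_ge ?_
  calc #{i | n / 8 ≤ #(N i)} * (n / 8).choose t
      = ∑ i ∈ {i | n / 8 ≤ #(N i)}, (n / 8).choose t := by rw [sum_const, smul_eq_mul]
    _ ≤ ∑ i ∈ {i | n / 8 ≤ #(N i)}, (#(N i)).choose t :=
        sum_le_sum fun i hi => Nat.choose_le_choose t (mem_filter.1 hi).2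
    _ ≤ ∑ i, (#(N i)).choose t := sum_le_sum_of_subset (subset_univ _)
    _ ≤ (t - 1) * n.choose t := hupper

section SplitBiclique

variable {ι κ : Type*}

lemma exists_monochromatic_biclique (c : ι → κ → Bool) {s : ℕ} {rows : Finset ι}
    {cols : Finset κ} (hrows : 2 * s ≤ #rows) (hcols : s * 4 ^ s ≤ #cols) :
    ∃ (ε : Bool) (A : Finset ι) (B : Finset κ), A ⊆ rows ∧ B ⊆ cols ∧ #A = s ∧ #B = s ∧
      ∀ i ∈ A, ∀ j ∈ B, c i j = ε := by
  classical
  obtain ⟨A₀, hA₀, hA₀s⟩ := exists_subset_card_eq hrows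
  -- pigeonhole on the `4 ^ s` possible red patterns of a column on the rows `A₀`
  obtain ⟨P, hP, hPs⟩ := exists_le_card_fiber_of_mul_le_card_of_maps_to
    (f := fun j => {i ∈ A₀ | c i j = true}) (n := s)
    (fun j _ => mem_powerset.2 (filter_subset _ _)) (powerset_nonempty A₀)
    (by rwa [card_powerset, hA₀s, pow_mul, mul_comm])
  obtain ⟨B, hB, hBs⟩ := exists_subset_card_eq hPs
  have hP : P ⊆ A₀ := mem_powerset.1 hP
  have hpattern : ∀ j ∈ B, ∀ i ∈ A₀, c i j = true ↔ i ∈ P := by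
    intro j hj i hi
    rw [← (mem_filter.1 (hB hj)).2, mem_filter]
    exact ⟨fun h => ⟨hi, h⟩, And.right⟩
  have hsplit : #(A₀ \ P) + #P = 2 * s := hA₀s ▸ card_sdiff_add_card_eq_card hP
  have hBcols : B ⊆ cols := hB.trans (filter_subset _ _)
  by_cases hbig : s ≤ #P
  · obtain ⟨A, hA, hAs⟩ := exists_subset_card_eq hbig
    refine ⟨true, A, B, (hA.trans hP).trans hA₀, hBcols, hAs, hBs, fun i hi j hj => ?_⟩
    exact (hpattern j hj i (hP (hA hi))).2 (hA hi)
  · obtain ⟨A, hA, hAs⟩ := exists_subset_card_eq (show s ≤ #(A₀ \ P) by omega)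
    refine ⟨false, A, B, (hA.trans sdiff_subset).trans hA₀, hBcols, hAs, hBs,
      fun i hi j hj => ?_⟩
    obtain ⟨hiA₀, hiP⟩ := mem_sdiff.1 (hA hi)
    simpa using mt (hpattern j hj i hiA₀).1 hiP

def HasSplitBiclique (c : ι → κ → Bool) (s : ℕ) : Prop :=
  ∃ (A₁ A₂ : Finset ι) (B : Finset κ), Disjoint A₁ A₂ ∧ s ≤ #A₁ ∧ s ≤ #A₂ ∧ s ≤ #B ∧
    ∀ j ∈ B, (∀ i ∈ A₁, c i j = true) ∧ ∀ i ∈ A₂, c i j = false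

lemma hasSplitBiclique_or_transpose [DecidableEq ι] [DecidableEq κ] {c : ι → κ → Bool}
    {s : ℕ} {Rr Rb : Finset ι} {Cr Cb : Finset κ}
    (hRr : 2 * s ≤ #Rr) (hCr : 2 * s ≤ #Cr) (hRb : 2 * s ≤ #Rb) (hCb : s * 4 ^ s ≤ #Cb)
    (hred : ∀ i ∈ Rr, ∀ j ∈ Cr, c i j = true) (hblue : ∀ i ∈ Rb, ∀ j ∈ Cb, c i j = false) :
    HasSplitBiclique c s ∨ HasSplitBiclique (fun j i => c i j) s := by
  obtain ⟨ε, A, B, hA, hB, hAs, hBs, hmono⟩ := exists_monochromatic_biclique c hRr hCb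
  cases ε with
  | true =>
    refine .inl ⟨A, Rb \ A, B, disjoint_sdiff, hAs.ge, ?_, hBs.ge, fun j hj => ?_⟩
    · have := le_card_sdiff A Rb; omega
    · exact ⟨fun i hi => hmono i hi j hj, fun i hi => hblue i (mem_sdiff.1 hi).1 j (hB hj)⟩
  | false =>
    refine .inr ⟨Cr \ B, B, A, sdiff_disjoint, ?_, hBs.ge, hAs.ge, fun i hi => ?_⟩
    · have := le_card_sdiff B Cr; omega
    · exact ⟨fun j hj => hred i (hA hi) j (mem_sdiff.1 hj).1, fun j hj => hmono i hi j hj⟩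

lemma exists_injective_mem_of_disjoint {α : Type*} [Fintype α] (U : Finset α)
    {A₁ A₂ : Finset ι} (hA : Disjoint A₁ A₂) (h₁ : Fintype.card α ≤ #A₁)
    (h₂ : Fintype.card α ≤ #A₂) :
    ∃ g : α → ι, Injective g ∧ ∀ x, (x ∈ U → g x ∈ A₁) ∧ (x ∉ U → g x ∈ A₂) := by
  classical
  obtain ⟨e₁⟩ := Function.Embedding.nonempty_of_card_le (h₁.trans (Fintype.card_coe A₁).ge)
  obtain ⟨e₂⟩ := Function.Embedding.nonempty_of_card_le (h₂.trans (Fintype.card_coe A₂).ge)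
  refine ⟨fun x => if x ∈ U then e₁ x else e₂ x, fun x y hxy => ?_, fun x => ?_⟩
  · have hne : ∀ x y, (e₁ x : ι) ≠ e₂ y := fun x y h =>
      disjoint_left.1 hA (e₁ x).2 (h ▸ (e₂ y).2)
    by_cases hx : x ∈ U <;> by_cases hy : y ∈ U <;> simp only [hx, hy, if_true, if_false] at hxy
    · exact e₁.injective (Subtype.ext hxy)
    · exact absurd hxy (hne x y)
    · exact absurd hxy.symm (hne y x)
    · exact e₂.injective (Subtype.ext hxy)
  · by_cases hx : x ∈ U <;> simp [hx]

lemma HasSplitBiclique.exists_injective {α β : Type*} [Fintype α] [Fintype β]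
    [DecidableEq α] {c : ι → κ → Bool} {s : ℕ} (h : HasSplitBiclique c s) (U : Finset α)
    (hα : Fintype.card α ≤ s) (hβ : Fintype.card β ≤ s) :
    ∃ (g : α → ι) (g' : β → κ), Injective g ∧ Injective g' ∧
      ∀ x y, c (g x) (g' y) = decide (x ∈ U) := by
  obtain ⟨A₁, A₂, B, hA, hA₁, hA₂, hB, hcol⟩ := h
  obtain ⟨g, hg, hgU⟩ := exists_injective_mem_of_disjoint U hA (hα.trans hA₁) (hα.trans hA₂)
  obtain ⟨e⟩ :=
    Function.Embedding.nonempty_of_card_le ((hβ.trans hB).trans (Fintype.card_coe B).ge)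
  refine ⟨g, fun y => e y, hg, Subtype.val_injective.comp e.injective, fun x y => ?_⟩
  by_cases hx : x ∈ U
  · simpa [hx] using (hcol _ (e y).2).1 _ ((hgU x).1 hx)
  · simpa [hx] using (hcol _ (e y).2).2 _ ((hgU x).2 hx)

end SplitBiclique

section Copies

variable {n : ℕ} {α β : Type*}

lemma blueB_eq_not_redB (c : Fin n → Fin n → Bool) {x y : Fin n ⊕ Fin n}
    (h : crossB x y = true) : blueB c x y = !redB c x y := by
  rcases x with v | v <;> rcases y with w | w <;> first | rfl | simp [crossB] at h

lemma edgeCounts_eq_of_redB_eq_decide [DecidableEq α] (c : Fin n → Fin n → Bool)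
    (E : Finset (α × β)) (U : Finset α) {f : α ⊕ β → Fin n ⊕ Fin n}
    (hf : ∀ a b, crossB (f (.inl a)) (f (.inr b)) = true ∧
      redB c (f (.inl a)) (f (.inr b)) = decide (a ∈ U)) :
    edgeRedCount c E f = #{p ∈ E | p.1 ∈ U} ∧ edgeBlueCount c E f = #{p ∈ E | p.1 ∉ U} := by
  refine ⟨congrArg card (filter_congr fun p _ => ?_), congrArg card (filter_congr fun p _ => ?_)⟩
  · simp [(hf p.1 p.2).2]
  · simp [blueB_eq_not_redB c (hf p.1 p.2).1, (hf p.1 p.2).2]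

lemma exists_copy_of_hasSplitBiclique [Fintype α] [Fintype β] [DecidableEq α]
    (E : Finset (α × β)) (U : Finset α) {c : Fin n → Fin n → Bool} {s : ℕ}
    (h : HasSplitBiclique c s ∨ HasSplitBiclique (fun j i => c i j) s)
    (hα : Fintype.card α ≤ s) (hβ : Fintype.card β ≤ s) :
    ∃ f : α ⊕ β → Fin n ⊕ Fin n, IsCopy E f ∧
      edgeRedCount c E f = #{p ∈ E | p.1 ∈ U} ∧ edgeBlueCount c E f = #{p ∈ E | p.1 ∉ U} := by
  suffices ∃ f : α ⊕ β → Fin n ⊕ Fin n, Injective f ∧ ∀ a b,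
      crossB (f (.inl a)) (f (.inr b)) = true ∧ redB c (f (.inl a)) (f (.inr b)) = decide (a ∈ U)
    from this.imp fun f ⟨hinj, hf⟩ =>
      ⟨⟨hinj, fun p _ => (hf p.1 p.2).1⟩, edgeCounts_eq_of_redB_eq_decide c E U hf⟩
  rcases h with h | h
  · obtain ⟨g, g', hg, hg', hgg'⟩ := h.exists_injective U hα hβ
    exact ⟨Sum.elim (.inl ∘ g) (.inr ∘ g'),
      (Sum.inl_injective.comp hg).sumElim (Sum.inr_injective.comp hg') fun _ _ => Sum.inl_ne_inr,
      fun a b => ⟨rfl, hgg' a b⟩⟩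
  · obtain ⟨g, g', hg, hg', hgg'⟩ := h.exists_injective U hα hβ
    exact ⟨Sum.elim (.inr ∘ g) (.inl ∘ g'),
      (Sum.inr_injective.comp hg).sumElim (Sum.inl_injective.comp hg') fun _ _ => Sum.inr_ne_inl,
      fun a b => ⟨rfl, hgg' a b⟩⟩

end Copies

theorem bipartite_r_tonal_sufficiency_general {α β : Type*} [Fintype α] [Fintype β]
    [DecidableEq α] (E : Finset (α × β)) (m r : ℕ)
    (hm : E.card = m)
    (hU : ∃ U : Finset α, (E.filter fun p => p.1 ∈ U).card = r) :
    ∃ N : ℕ, 0 < N ∧ ∀ n : ℕ, N ≤ n → ∃ z : ℕ, 2 * z < n ^ 2 ∧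
      ∀ c : Fin n → Fin n → Bool, z < redTotal c → z < blueTotal c →
        ∃ f : α ⊕ β → Fin n ⊕ Fin n, IsCopy E f ∧
          ((edgeRedCount c E f = r ∧ edgeBlueCount c E f = m - r) ∨
           (edgeRedCount c E f = m - r ∧ edgeBlueCount c E f = r)) := by
  obtain ⟨U, rfl⟩ := hU
  set s := max (Fintype.card α) (Fintype.card β)
  set t := 2 * s + s * 4 ^ s with ht_def
  refine ⟨16 * (t * 31 ^ t + 1), by positivity, fun n hn => ⟨(n / 2) ^ 2, ?_, fun c hR hB => ?_⟩⟩
  · calc 2 * (n / 2) ^ 2 = n / 2 * 2 * (n / 2) := by ring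
      _ ≤ n * (n / 2) := Nat.mul_le_mul_right _ (Nat.div_mul_le_self n 2)
      _ < n ^ 2 := by rw [sq]; exact Nat.mul_lt_mul_of_pos_left (by omega) (by omega)
  have ht : t * 31 ^ t < n / 16 := by omega
  obtain ⟨Rr, Cr, hRr, hCr, hred⟩ := exists_prod_subset_of_sq_half_lt_card _ ht hR
  obtain ⟨Rb, Cb, hRb, hCb, hblue⟩ := exists_prod_subset_of_sq_half_lt_card _ ht hB
  have hRrCr : ∀ i ∈ Rr, ∀ j ∈ Cr, c i j = true := fun i hi j hj => by
    simpa using hred (mk_mem_product hi hj)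
  have hRbCb : ∀ i ∈ Rb, ∀ j ∈ Cb, c i j = false := fun i hi j hj => by
    simpa using hblue (mk_mem_product hi hj)
  have hsplit : HasSplitBiclique c s ∨ HasSplitBiclique (fun j i => c i j) s :=
    hasSplitBiclique_or_transpose (by omega) (by omega) (by omega) (by omega) hRrCr hRbCb
  obtain ⟨f, hf, hfR, hfB⟩ :=
    exists_copy_of_hasSplitBiclique E U hsplit (le_max_left _ _) (le_max_right _ _)
  refine ⟨f, hf, .inl ⟨hfR, ?_⟩⟩
  have := card_filter_add_card_filter_not (s := E) (fun p => p.1 ∈ U)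
  omega

/-- Sufficiency for bipartite `r`-tonality.  Let `G` be a bipartite graph with fixed
bipartition `X_G ⊔ Y_G` (parts `α` and `β`, edge set `E`), `m` edges, and let
`0 ≤ r ≤ ⌊m/2⌋`.  If there is a set `U ⊆ X_G` such that exactly `r` edges of `G` are
incident to a vertex of `U`, then there is `N` such that for every `n ≥ N` there is an
integer `z < n²/2` such that every 2-edge coloring of `K_{n,n}` with more than `z` edges
in each color class contains a copy of `G` with exactly `r` edges in one color and
`m - r` edges in the other. -/
theorem bipartite_r_tonal_sufficiency {α β : Type*} [Fintype α] [Fintype β]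
    [DecidableEq α] [DecidableEq β] (E : Finset (α × β)) (m r : ℕ)
    (hm : E.card = m) (hr : r ≤ m / 2)
    (hU : ∃ U : Finset α, (E.filter fun p => p.1 ∈ U).card = r) :
    ∃ N : ℕ, 0 < N ∧ ∀ n : ℕ, N ≤ n → ∃ z : ℕ, 2 * z < n ^ 2 ∧
      ∀ c : Fin n → Fin n → Bool, z < redTotal c → z < blueTotal c →
        ∃ f : α ⊕ β → Fin n ⊕ Fin n, IsCopy E f ∧
          ((edgeRedCount c E f = r ∧ edgeBlueCount c E f = m - r) ∨
           (edgeRedCount c E f = m - r ∧ edgeBlueCount c E f = r)) :=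
  bipartite_r_tonal_sufficiency_general E m r hm hU
end

section
/- Let T be a tree with k edges and let V(T) = X ⊔ Y be its bipartition. For every integer r with 0 ≤ r ≤ k there exists a set U ⊆ V(T) with U ⊆ X or U ⊆ Y such that exactly r edges of T are incident to a vertex of U. -/
/-!
Let `Z` be the larger side of the bipartition. Every edge has exactly one endpoint in `Z`, so the
edges incident to `U ⊆ Z` number `∑_{v ∈ U} deg v`, and the degrees on `Z` are positive integers
with sum `k < 2|Z|` (a tree has `k + 1` vertices). Such a family has every `r ≤ k` as a subset
sum: sorted increasingly, each term is at most one more than the sum of the strictly smaller ones,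
because the degree-one vertices of `Z` are numerous enough to bridge any larger degree.
-/

open Finset

namespace Finset

variable {ι : Type*} [DecidableEq ι] {s : Finset ι} {f : ι → ℕ}

theorem exists_subset_sum_eq_of_forall_le_one_add_sum_lt
    (hf : ∀ v ∈ s, f v ≤ 1 + ∑ u ∈ s with f u < f v, f u) {r : ℕ}
    (hr : r ≤ ∑ u ∈ s, f u) : ∃ t ⊆ s, ∑ u ∈ t, f u = r := by
  induction s using Finset.strongInduction generalizing r with
  | H s ih =>
  obtain rfl | hs := s.eq_empty_or_nonempty
  · rw [sum_empty, Nat.le_zero] at hr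
    exact ⟨∅, subset_rfl, by simp [hr]⟩
  obtain ⟨v, hv, hmax⟩ := s.exists_max_image f hs
  have hf' : ∀ w ∈ s.erase v, f w ≤ 1 + ∑ u ∈ s.erase v with f u < f w, f u := by
    intro w hw
    have hw' := mem_of_mem_erase hw
    rw [filter_erase, erase_eq_of_notMem (by simpa using fun _ => hmax w hw')]
    exact hf w hw'
  have hsplit := add_sum_erase s f hv
  by_cases hle : r ≤ ∑ u ∈ s.erase v, f u
  · obtain ⟨t, hts, ht⟩ := ih _ (erase_ssubset hv) hf' hle
    exact ⟨t, hts.trans (erase_subset _ _), ht⟩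
  · have hsmaller : ∑ u ∈ s with f u < f v, f u ≤ ∑ u ∈ s.erase v, f u :=
      sum_le_sum_of_subset fun u hu => by
        rw [mem_filter] at hu
        exact mem_erase.2 ⟨by rintro rfl; exact hu.2.false, hu.1⟩
    have hfv := hf v hv
    obtain ⟨t, hts, ht⟩ := ih _ (erase_ssubset hv) hf' (r := r - f v) (by omega)
    refine ⟨insert v t, insert_subset hv (hts.trans (erase_subset _ _)), ?_⟩
    rw [sum_insert fun h => (mem_erase.1 (hts h)).1 rfl, ht]
    omega

theorem le_one_add_sum_lt_of_sum_lt_two_mul_card (hpos : ∀ v ∈ s, 0 < f v)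
    (hsum : ∑ u ∈ s, f u < 2 * #s) {v : ι} (hv : v ∈ s) :
    f v ≤ 1 + ∑ u ∈ s with f u < f v, f u := by
  obtain hv1 | hv2 : f v ≤ 1 ∨ 2 ≤ f v := by omega
  · omega
  -- `f u = 1 < f v` whenever `f u < 2`, so each `u ≠ v` contributes at least `2` on the right
  have htwo : ∑ _u ∈ s.erase v, 2 ≤ ∑ u ∈ s.erase v, (f u + if f u < f v then f u else 0) :=
    sum_le_sum fun u hu => by
      have := hpos u (mem_of_mem_erase hu)
      split_ifs <;> omega
  have hsmaller : ∑ u ∈ s.erase v with f u < f v, f u ≤ ∑ u ∈ s with f u < f v, f u :=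
    sum_le_sum_of_subset (filter_subset_filter _ (erase_subset _ _))
  rw [sum_add_distrib, ← sum_filter, sum_const, card_erase_of_mem hv, smul_eq_mul] at htwo
  have hsplit := add_sum_erase s f hv
  have hcard := card_pos.2 ⟨v, hv⟩
  omega

end Finset

namespace SimpleGraph

variable {V : Type*} [Fintype V] {G : SimpleGraph V} [DecidableRel G.Adj]

theorem ncard_incident_edges_eq_sum_degree {U : Finset V} (hU : G.IsIndepSet U) :
    {e ∈ G.edgeSet | ∃ v ∈ (U : Set V), v ∈ e}.ncard = ∑ v ∈ U, G.degree v := by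
  classical
  have hbiUnion : {e ∈ G.edgeSet | ∃ v ∈ (U : Set V), v ∈ e} = ↑(U.biUnion (G.incidenceFinset ·)) := by
    ext e
    simp only [Set.mem_ofPred_eq, coe_biUnion, mem_coe, coe_incidenceFinset, Set.mem_iUnion,
      incidenceSet, exists_prop]
    tauto
  rw [hbiUnion, Set.ncard_coe_finset, card_biUnion]
  · exact sum_congr rfl fun v _ => card_incidenceFinset_eq_degree G v
  · intro a ha b hb hab
    rw [Function.onFun, ← disjoint_coe, coe_incidenceFinset, coe_incidenceFinset, Set.disjoint_iff_inter_eq_empty]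
    exact G.incidenceSet_inter_incidenceSet_of_not_adj (hU ha hb hab) hab

theorem exists_subset_ncard_incident_edges_eq {Z : Set V} (hZ : G.IsIndepSet Z)
    (hcover : ∀ a b, G.Adj a b → a ∈ Z ∨ b ∈ Z) (hpos : ∀ v ∈ Z, 0 < G.degree v)
    (hcard : G.edgeSet.ncard < 2 * Z.ncard) {r : ℕ} (hr : r ≤ G.edgeSet.ncard) :
    ∃ U ⊆ Z, {e ∈ G.edgeSet | ∃ v ∈ U, v ∈ e}.ncard = r := by
  classical
  have hZ' : G.IsIndepSet (Z.toFinset : Set V) := by rwa [Set.coe_toFinset]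
  have hsum : ∑ v ∈ Z.toFinset, G.degree v = G.edgeSet.ncard := by
    rw [← ncard_incident_edges_eq_sum_degree hZ', Set.coe_toFinset]
    congr 1
    ext e
    refine and_iff_left_of_imp fun he => ?_
    induction e using Sym2.ind with
    | h a b =>
      exact (hcover a b he).elim (fun h => ⟨a, h, Sym2.mem_mk_left a b⟩)
        (fun h => ⟨b, h, Sym2.mem_mk_right a b⟩)
  rw [Set.ncard_eq_toFinset_card' Z] at hcard
  obtain ⟨t, htZ, ht⟩ := exists_subset_sum_eq_of_forall_le_one_add_sum_lt
    (fun v hv => le_one_add_sum_lt_of_sum_lt_two_mul_card (fun v hv => hpos v (by simpa using hv))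
      (hsum ▸ hcard) hv) (hsum ▸ hr)
  have htZ' : (t : Set V) ⊆ Z := by simpa using coe_subset.2 htZ
  exact ⟨t, htZ', (ncard_incident_edges_eq_sum_degree (hZ.mono htZ')).trans ht⟩

end SimpleGraph

/-- Let `T` be a tree with `k` edges and bipartition `V(T) = X ⊔ Y` (so `X` and `Y`
partition the vertex set and every edge of `T` has one endpoint in `X` and one in `Y`).
Then for every `0 ≤ r ≤ k` there is a set `U` contained in `X` or in `Y` such that
exactly `r` edges of `T` are incident to a vertex of `U`. -/
theorem tree_tonal_sets {γ : Type*} [Fintype γ] (T : SimpleGraph γ) (hT : T.IsTree)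
    (k : ℕ) (hk : T.edgeSet.ncard = k) (X Y : Set γ)
    (hdisj : Disjoint X Y) (hcover : X ∪ Y = Set.univ)
    (hbip : ∀ a b, T.Adj a b → (a ∈ X ∧ b ∈ Y) ∨ (a ∈ Y ∧ b ∈ X)) :
    ∀ r : ℕ, r ≤ k → ∃ U : Set γ, (U ⊆ X ∨ U ⊆ Y) ∧
      {e ∈ T.edgeSet | ∃ v ∈ U, v ∈ e}.ncard = r := by
  classical
  intro r hr
  obtain rfl | hr0 := Nat.eq_zero_or_pos r
  · exact ⟨∅, Or.inl (Set.empty_subset X), by simp⟩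
  wlog hYX : Y.ncard ≤ X.ncard generalizing X Y
  · obtain ⟨U, hU, hUr⟩ := this Y X hdisj.symm (by rwa [Set.union_comm])
      (fun a b h => (hbip a b h).symm) (by omega)
    exact ⟨U, hU.symm, hUr⟩
  have hV : Fintype.card γ = k + 1 := by
    rw [← hT.card_edgeFinset, ← hk, ← SimpleGraph.coe_edgeFinset, Set.ncard_coe_finset]
  have hXY : X.ncard + Y.ncard = k + 1 := by
    rw [← Set.ncard_union_eq hdisj, hcover, Set.ncard_univ, Nat.card_eq_fintype_card, hV]
  have : Nontrivial γ := Fintype.one_lt_card_iff_nontrivial.1 (by omega)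
  have hXindep : T.IsIndepSet X := fun a ha b hb _ hab => by
    rcases hbip a b hab with ⟨-, hbY⟩ | ⟨haY, -⟩
    exacts [Set.disjoint_left.1 hdisj hb hbY, Set.disjoint_left.1 hdisj ha haY]
  obtain ⟨U, hUX, hUr⟩ := SimpleGraph.exists_subset_ncard_incident_edges_eq hXindep
    (fun a b h => (hbip a b h).imp And.left And.right)
    (fun v _ => hT.connected.preconnected.degree_pos_of_nontrivial v) (by omega) (hk ▸ hr)
  exact ⟨U, Or.inl hUX, hUr⟩
end

section
/- Let k ≥ 2 be an even integer, let n ≥ 2 be an integer with n > ((k−2)/2)·(k/2 − ⌊(k−2)/4⌋), and set s = ⌊(k−2)/4⌋ and p(n,k) = s·n + 1 if k ≡ 0 (mod 4), p(n,k) = s·n if k ≡ 2 (mod 4). Consider the 2-edge coloring of K_{n,n} (with parts V and W of size n) whose red edge set is: all edges between a fixed s-element set S ⊆ V and W, if k ≡ 2 (mod 4); or all edges between a fixed s-element set S ⊆ V and W together with one additional edge joining a vertex of V ∖ S to a vertex of W (so the red graph is K_{s,n} with one extra pendant vertex attached to a vertex of the part of size n), if k ≡ 0 (mod 4); all remaining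 edges are blue. This coloring has exactly p(n,k) red edges and contains no balanced copy of the path P_k (no path with k edges having exactly k/2 red and k/2 blue edges) and no balanced copy of the path P_{k+1} (no path with k+1 edges having at least k/2 edges of each color). -/
/-- `IsPathCopy v` says that the vertex sequence `v : Fin (ℓ+1) → Fin n ⊕ Fin n` realizes
a copy of the path `P_ℓ` with `ℓ` edges in `K_{n,n}`: the vertices are pairwise distinct
and consecutive vertices lie in different parts (hence are adjacent in `K_{n,n}`). -/
def IsPathCopy {n ℓ : ℕ} (v : Fin (ℓ + 1) → Fin n ⊕ Fin n) : Prop :=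
  Function.Injective v ∧ ∀ i : Fin ℓ, crossB (v i.castSucc) (v i.succ) = true

/-- The number of red edges of the path copy `v` in `K_{n,n}` colored by `c`. -/
def pathRedCount {n ℓ : ℕ} (c : Fin n → Fin n → Bool)
    (v : Fin (ℓ + 1) → Fin n ⊕ Fin n) : ℕ :=
  (Finset.univ.filter fun i : Fin ℓ => redB c (v i.castSucc) (v i.succ) = true).card

/-- The number of blue edges of the path copy `v` in `K_{n,n}` colored by `c`. -/
def pathBlueCount {n ℓ : ℕ} (c : Fin n → Fin n → Bool)
    (v : Fin (ℓ + 1) → Fin n ⊕ Fin n) : ℕ :=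
  (Finset.univ.filter fun i : Fin ℓ => blueB c (v i.castSucc) (v i.succ) = true).card

/-! Every red edge has its left endpoint in `S` or is the one extra edge `u w₀`. A path visits
each vertex at most once, so at most `2s` of its edges meet `S`, and it contains the extra edge
at most once. Hence a path has at most `2s + 1` red edges when `4 ∣ k` and at most `2s`
otherwise, which in both cases is fewer than `k / 2`. -/

open Finset

section PathEdges

variable {α : Type*} {ℓ : ℕ} {v : Fin (ℓ + 1) → α}

theorem injective_pathEdge (hv : Function.Injective v) :
    Function.Injective fun i : Fin ℓ => s(v i.castSucc, v i.succ) := by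
  intro i j hij
  rcases Sym2.eq_iff.1 hij with ⟨h, -⟩ | ⟨h₁, h₂⟩
  · exact Fin.castSucc_injective _ (hv h)
  · have e₁ := Fin.val_eq_of_eq (hv h₁)
    have e₂ := Fin.val_eq_of_eq (hv h₂)
    simp only [Fin.val_castSucc, Fin.val_succ] at e₁ e₂
    omega

variable [DecidableEq α]

theorem card_filter_pathEdge_meets_le (hv : Function.Injective v) (T : Finset α) :
    #{i : Fin ℓ | v i.castSucc ∈ T ∨ v i.succ ∈ T} ≤ 2 * #T := by
  rw [filter_or, two_mul]
  refine (card_union_le _ _).trans (add_le_add ?_ ?_)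
  · exact card_le_card_of_injOn (fun i => v i.castSucc) (fun i hi => (mem_filter.1 hi).2)
      ((hv.comp (Fin.castSucc_injective ℓ)).injOn)
  · exact card_le_card_of_injOn (fun i => v i.succ) (fun i hi => (mem_filter.1 hi).2)
      ((hv.comp (Fin.succ_injective ℓ)).injOn)

theorem card_filter_pathEdge_mem_le (hv : Function.Injective v) (F : Finset (Sym2 α)) :
    #{i : Fin ℓ | s(v i.castSucc, v i.succ) ∈ F} ≤ #F :=
  card_le_card_of_injOn _ (fun _ hi => (mem_filter.1 hi).2) (injective_pathEdge hv).injOn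

end PathEdges

theorem exists_of_redB_eq_true {n : ℕ} {c : Fin n → Fin n → Bool} {x y : Fin n ⊕ Fin n}
    (h : redB c x y = true) : ∃ a w, c a w = true ∧ s(x, y) = s(.inl a, .inr w) := by
  rcases x with a | w <;> rcases y with a' | w' <;> simp only [redB, Bool.false_eq_true] at h
  · exact ⟨a, w', h, rfl⟩
  · exact ⟨a', w, h, Sym2.eq_swap⟩

theorem pathRedCount_le {n ℓ : ℕ} (c : Fin n → Fin n → Bool) (S : Finset (Fin n))
    (E : Finset (Fin n × Fin n)) (hc : ∀ a w, c a w = true → a ∈ S ∨ (a, w) ∈ E)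
    {v : Fin (ℓ + 1) → Fin n ⊕ Fin n} (hv : Function.Injective v) :
    pathRedCount c v ≤ 2 * #S + #E := by
  set T := S.map .inl
  set F := E.image fun p => s(Sum.inl p.1, Sum.inr p.2)
  have hsub : univ.filter (fun i : Fin ℓ => redB c (v i.castSucc) (v i.succ) = true) ⊆
      univ.filter (fun i : Fin ℓ => v i.castSucc ∈ T ∨ v i.succ ∈ T) ∪
        univ.filter (fun i : Fin ℓ => s(v i.castSucc, v i.succ) ∈ F) := by
    intro i hi
    obtain ⟨a, w, hred, hedge⟩ := exists_of_redB_eq_true (mem_filter.1 hi).2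
    simp only [mem_union, mem_filter, mem_univ, true_and]
    rcases hc a w hred with ha | haw
    · have : Sum.inl a ∈ s(v i.castSucc, v i.succ) := hedge ▸ Sym2.mem_mk_left _ _
      rcases Sym2.mem_iff.1 this with h | h
      · exact .inl (.inl (h ▸ mem_map_of_mem _ ha))
      · exact .inl (.inr (h ▸ mem_map_of_mem _ ha))
    · exact .inr (mem_image.2 ⟨(a, w), haw, hedge.symm⟩)
  calc pathRedCount c v ≤ _ := card_le_card hsub
    _ ≤ _ := card_union_le _ _
    _ ≤ 2 * #T + #F :=
      add_le_add (card_filter_pathEdge_meets_le hv T) (card_filter_pathEdge_mem_le hv F)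
    _ ≤ 2 * #S + #E := by rw [card_map]; gcongr; exact card_image_le

theorem redTotal_eq {n : ℕ} (c : Fin n → Fin n → Bool) (S : Finset (Fin n))
    (E : Finset (Fin n × Fin n)) (hc : ∀ a w, c a w = true ↔ a ∈ S ∨ (a, w) ∈ E)
    (hE : ∀ p ∈ E, p.1 ∉ S) :
    redTotal c = #S * n + #E := by
  classical
  have hred : ({p : Fin n × Fin n | c p.1 p.2 = true} : Finset _) = S ×ˢ univ ∪ E := by
    ext p
    simp [hc]
  rw [redTotal, hred, card_union_of_disjoint, card_product, card_univ, Fintype.card_fin]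
  exact disjoint_left.2 fun p hpS hpE => hE p hpE (mem_product.1 hpS).1

theorem bbal_paths_extremal_general (k n : ℕ) (hk2 : 2 ≤ k)
    (S : Finset (Fin n)) (hS : S.card = (k - 2) / 4) (u w₀ : Fin n) (hu : u ∉ S)
    (c : Fin n → Fin n → Bool)
    (hc : ∀ v w, c v w = true ↔ (v ∈ S ∨ (k % 4 = 0 ∧ v = u ∧ w = w₀))) :
    redTotal c = (if k % 4 = 0 then (k - 2) / 4 * n + 1 else (k - 2) / 4 * n) ∧
    (¬ ∃ v : Fin (k + 1) → Fin n ⊕ Fin n, IsPathCopy v ∧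
        pathRedCount c v = k / 2 ∧ pathBlueCount c v = k / 2) ∧
    (¬ ∃ v : Fin (k + 1 + 1) → Fin n ⊕ Fin n, IsPathCopy v ∧
        k / 2 ≤ pathRedCount c v ∧ k / 2 ≤ pathBlueCount c v) := by
  set E : Finset (Fin n × Fin n) := if k % 4 = 0 then {(u, w₀)} else ∅
  have hcE : ∀ a w, c a w = true ↔ a ∈ S ∨ (a, w) ∈ E := by
    intro a w
    rw [hc]
    by_cases hk : k % 4 = 0 <;> simp [E, hk]
  have hE : ∀ p ∈ E, p.1 ∉ S := by
    intro p hp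
    by_cases hk : k % 4 = 0 <;> simp_all [E]
  have hEcard : #E = if k % 4 = 0 then 1 else 0 := by
    by_cases hk : k % 4 = 0 <;> simp [E, hk]
  have hred : ∀ {ℓ} (v : Fin (ℓ + 1) → Fin n ⊕ Fin n),
      IsPathCopy v → pathRedCount c v < k / 2 := by
    intro ℓ v hv
    have := pathRedCount_le c S E (fun a w h => (hcE a w).1 h) hv.1
    split_ifs at hEcard <;> omega
  refine ⟨?_, fun ⟨v, hv, hr, _⟩ => (hred v hv).ne hr,
    fun ⟨v, hv, hr, _⟩ => (hred v hv).not_ge hr⟩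
  rw [redTotal_eq c S E hcE hE, hEcard, hS]
  split_ifs <;> rfl

/-- Bipartite balancing number of paths, lower bound (extremal coloring).  Let `k ≥ 2` be
even, `n ≥ 2` with `n > ((k-2)/2)·(k/2 - ⌊(k-2)/4⌋)`, and `s = ⌊(k-2)/4⌋`.  Color red all
edges between a fixed `s`-set `S` of the first part and the whole second part, plus (when
`k ≡ 0 (mod 4)`) one extra edge from `u ∉ S` to a vertex `w₀` of the second part; all
other edges are blue.  This coloring has exactly `p(n,k)` red edges (where
`p(n,k) = s·n + 1` if `k ≡ 0 (mod 4)` and `p(n,k) = s·n` if `k ≡ 2 (mod 4)`), no balanced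
copy of `P_k` (no path with `k` edges, `k/2` of each color), and no balanced copy of
`P_{k+1}` (no path with `k+1` edges having at least `k/2` edges of each color). -/
theorem bbal_paths_extremal (k n : ℕ) (hk2 : 2 ≤ k) (hkeven : Even k) (hn2 : 2 ≤ n)
    (hn : (k - 2) / 2 * (k / 2 - (k - 2) / 4) < n)
    (S : Finset (Fin n)) (hS : S.card = (k - 2) / 4) (u w₀ : Fin n) (hu : u ∉ S)
    (c : Fin n → Fin n → Bool)
    (hc : ∀ v w, c v w = true ↔ (v ∈ S ∨ (k % 4 = 0 ∧ v = u ∧ w = w₀))) :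
    redTotal c = (if k % 4 = 0 then (k - 2) / 4 * n + 1 else (k - 2) / 4 * n) ∧
    (¬ ∃ v : Fin (k + 1) → Fin n ⊕ Fin n, IsPathCopy v ∧
        pathRedCount c v = k / 2 ∧ pathBlueCount c v = k / 2) ∧
    (¬ ∃ v : Fin (k + 1 + 1) → Fin n ⊕ Fin n, IsPathCopy v ∧
        k / 2 ≤ pathRedCount c v ∧ k / 2 ≤ pathBlueCount c v) :=
  bbal_paths_extremal_general k n hk2 S hS u w₀ hu c hc
end

section
/- Let k ≥ 2 be an even integer and let n be an integer with n ≥ k²/2 + k − 2. Set a(n,k) = (k−2)·n − (k−2)²/4. Let the parts of K_{n,n} be A = A₁ ⊔ A₂ and B = B₁ ⊔ B₂ with |A₂| = |B₁| = (k−2)/2 and |A₁| = |B₂| = n − (k−2)/2, and consider the 2-edge coloring whose red edges are exactly all edges between A₁ and B₁ together with all edges between A₂ and B, all remaining edges being blue. This coloring has exactly a(n,k) red edges and contains no balanced copy of K_{1,k}, i.e., no vertex of K_{n,n} is incident to at least k/2 red edges and at least k/2 blue edges; in particular it also contains no balanced copy of K_{1,k+1}. -/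
/-- The red degree of a vertex `v` of the first part of `K_{n,n}`. -/
def redDegL {n : ℕ} (c : Fin n → Fin n → Bool) (v : Fin n) : ℕ :=
  (Finset.univ.filter fun w : Fin n => c v w = true).card

/-- The blue degree of a vertex `v` of the first part of `K_{n,n}`. -/
def blueDegL {n : ℕ} (c : Fin n → Fin n → Bool) (v : Fin n) : ℕ :=
  (Finset.univ.filter fun w : Fin n => c v w = false).card

/-- The red degree of a vertex `w` of the second part of `K_{n,n}`. -/
def redDegR {n : ℕ} (c : Fin n → Fin n → Bool) (w : Fin n) : ℕ :=
  (Finset.univ.filter fun v : Fin n => c v w = true).card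

/-- The blue degree of a vertex `w` of the second part of `K_{n,n}`. -/
def blueDegR {n : ℕ} (c : Fin n → Fin n → Bool) (w : Fin n) : ℕ :=
  (Finset.univ.filter fun v : Fin n => c v w = false).card

/-- A balanced copy of the star `K_{1,k}` (`k` even) in the coloring `c`: a vertex of
`K_{n,n}` incident to at least `k/2` red edges and at least `k/2` blue edges. -/
def HasBalancedStar {n : ℕ} (c : Fin n → Fin n → Bool) (k : ℕ) : Prop :=
  (∃ v : Fin n, k / 2 ≤ redDegL c v ∧ k / 2 ≤ blueDegL c v) ∨
  (∃ w : Fin n, k / 2 ≤ redDegR c w ∧ k / 2 ≤ blueDegR c w)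

/-- A balanced copy of the star `K_{1,k+1}` (`k` even) in the coloring `c`: a vertex of
`K_{n,n}` incident to `k/2` edges of one color and `k/2 + 1` edges of the other. -/
def HasBalancedOddStar {n : ℕ} (c : Fin n → Fin n → Bool) (k : ℕ) : Prop :=
  (∃ v : Fin n, (k / 2 ≤ redDegL c v ∧ k / 2 + 1 ≤ blueDegL c v) ∨
                (k / 2 + 1 ≤ redDegL c v ∧ k / 2 ≤ blueDegL c v)) ∨
  (∃ w : Fin n, (k / 2 ≤ redDegR c w ∧ k / 2 + 1 ≤ blueDegR c w) ∨
                (k / 2 + 1 ≤ redDegR c w ∧ k / 2 ≤ blueDegR c w))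

/-- Bipartite balancing number of stars, lower bound (extremal coloring).  Let `k ≥ 2` be
even and `n ≥ k²/2 + k - 2`.  Split the parts of `K_{n,n}` as `A = A₁ ⊔ A₂` and
`B = B₁ ⊔ B₂` with `|A₂| = |B₁| = (k-2)/2`, and color red exactly the edges between `A₁`
and `B₁` together with the edges between `A₂` and `B`.  This coloring has exactly
`a(n,k) = (k-2)·n - (k-2)²/4` red edges and contains no balanced copy of `K_{1,k}` (no
vertex incident to at least `k/2` red and at least `k/2` blue edges); in particular it
contains no balanced copy of `K_{1,k+1}`. -/
theorem bbal_stars_extremal (k n : ℕ) (hk2 : 2 ≤ k) (hkeven : Even k)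
    (hn : k ^ 2 / 2 + k - 2 ≤ n)
    (A₂ B₁ : Finset (Fin n)) (hA₂ : A₂.card = (k - 2) / 2) (hB₁ : B₁.card = (k - 2) / 2)
    (c : Fin n → Fin n → Bool)
    (hc : ∀ v w, c v w = true ↔ (v ∈ A₂ ∨ w ∈ B₁)) :
    redTotal c = (k - 2) * n - (k - 2) ^ 2 / 4 ∧
    ¬ HasBalancedStar c k ∧ ¬ HasBalancedOddStar c k := by
  obtain ⟨m', hm'⟩ := hkeven
  set m := (k - 2) / 2 with hm
  have hk : k = 2 * m + 2 := by omega
  have hk2' : k / 2 = m + 1 := by omega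
  have hmn : m ≤ n := by
    have := Finset.card_le_univ A₂
    simpa [hA₂] using this
  -- degrees
  have hredL : ∀ v : Fin n, redDegL c v = if v ∈ A₂ then n else m := by
    intro v
    unfold redDegL
    by_cases hv : v ∈ A₂
    · have : (Finset.univ.filter fun w : Fin n => c v w = true) = Finset.univ := by
        ext w; simp [hc, hv]
      simp [this, hv]
    · have : (Finset.univ.filter fun w : Fin n => c v w = true) = B₁ := by
        ext w; simp [hc, hv]
      simp [this, hv, hB₁]
  have hblueL : ∀ v : Fin n, blueDegL c v = if v ∈ A₂ then 0 else n - m := by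
    intro v
    unfold blueDegL
    by_cases hv : v ∈ A₂
    · have : (Finset.univ.filter fun w : Fin n => c v w = false) = ∅ := by
        ext w; simp [Bool.eq_false_iff, hc, hv]
      simp [this, hv]
    · have : (Finset.univ.filter fun w : Fin n => c v w = false) = B₁ᶜ := by
        ext w; simp [Bool.eq_false_iff, hc, hv]
      simp [this, hv, Finset.card_compl, hB₁]
  have hredR : ∀ w : Fin n, redDegR c w = if w ∈ B₁ then n else m := by
    intro w
    unfold redDegR
    by_cases hw : w ∈ B₁
    · have : (Finset.univ.filter fun v : Fin n => c v w = true) = Finset.univ := by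
        ext v; simp [hc, hw]
      simp [this, hw]
    · have : (Finset.univ.filter fun v : Fin n => c v w = true) = A₂ := by
        ext v; simp [hc, hw]
      simp [this, hw, hA₂]
  have hblueR : ∀ w : Fin n, blueDegR c w = if w ∈ B₁ then 0 else n - m := by
    intro w
    unfold blueDegR
    by_cases hw : w ∈ B₁
    · have : (Finset.univ.filter fun v : Fin n => c v w = false) = ∅ := by
        ext v; simp [Bool.eq_false_iff, hc, hw]
      simp [this, hw]
    · have : (Finset.univ.filter fun v : Fin n => c v w = false) = A₂ᶜ := by
        ext v; simp [Bool.eq_false_iff, hc, hw]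
      simp [this, hw, Finset.card_compl, hA₂]
  refine ⟨?_, ?_, ?_⟩
  · -- count red edges
    have hset : (Finset.univ.filter fun p : Fin n × Fin n => c p.1 p.2 = true)
        = (A₂ ×ˢ Finset.univ) ∪ (Finset.univ ×ˢ B₁) := by
      ext p; simp [hc, Finset.mem_product]
    have hint : (A₂ ×ˢ Finset.univ) ∩ (Finset.univ ×ˢ B₁) = A₂ ×ˢ B₁ := by
      ext p; simp [Finset.mem_product]
    have hcard := Finset.card_union_add_card_inter (A₂ ×ˢ (Finset.univ : Finset (Fin n)))
      ((Finset.univ : Finset (Fin n)) ×ˢ B₁)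
    rw [hint] at hcard
    simp only [Finset.card_product, hA₂, hB₁, Finset.card_univ, Fintype.card_fin] at hcard
    have hrt : redTotal c = ((A₂ ×ˢ Finset.univ) ∪ (Finset.univ ×ˢ B₁)).card := by
      rw [redTotal, hset]
    have hgoal : (k - 2) * n - (k - 2) ^ 2 / 4 = 2 * m * n - (m * m) := by
      have h1 : k - 2 = 2 * m := by omega
      have h2 : (2 * m) ^ 2 / 4 = m * m := by
        have : (2 * m) ^ 2 = 4 * (m * m) := by ring
        rw [this]; omega
      rw [h1, h2]
    rw [hrt, hgoal]
    have hmm : m * m ≤ m * n := Nat.mul_le_mul_left m hmn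
    have h2mn : 2 * m * n = m * n + m * n := by ring
    have hnm : n * m = m * n := Nat.mul_comm n m
    omega
  · rintro (⟨v, hr, hb⟩ | ⟨w, hr, hb⟩)
    · rw [hredL v] at hr; rw [hblueL v] at hb
      by_cases hv : v ∈ A₂ <;> simp [hv] at hr hb <;> omega
    · rw [hredR w] at hr; rw [hblueR w] at hb
      by_cases hw : w ∈ B₁ <;> simp [hw] at hr hb <;> omega
  · rintro (⟨v, ⟨hr, hb⟩ | ⟨hr, hb⟩⟩ | ⟨w, ⟨hr, hb⟩ | ⟨hr, hb⟩⟩) <;>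
      [rw [hredL v] at hr; rw [hredL v] at hr; rw [hredR w] at hr; rw [hredR w] at hr] <;>
      [rw [hblueL v] at hb; rw [hblueL v] at hb; rw [hblueR w] at hb; rw [hblueR w] at hb]
    · by_cases hv : v ∈ A₂ <;> simp [hv] at hr hb <;> omega
    · by_cases hv : v ∈ A₂ <;> simp [hv] at hr hb <;> omega
    · by_cases hw : w ∈ B₁ <;> simp [hw] at hr hb <;> omega
    · by_cases hw : w ∈ B₁ <;> simp [hw] at hr hb <;> omega
end

section
/- Let k ≥ 2 be an even integer and let n be an integer with n ≥ k²/2 + k − 2. Set a(n,k) = (k−2)·n − (k−2)²/4, and let H be the bipartite graph with parts A = A₁ ⊔ A₂ and B = B₁ ⊔ B₂, where |A₂| = |B₁| = (k−2)/2 and |A₁| = |B₂| = n − (k−2)/2, whose edges are all pairs between A₁ and B₁ and all pairs between A₂ and B. Then every 2-edge coloring E(K_{n,n}) = R ⊔ B with at least a(n,k) edges in each color class either contains a balanced copy of K_{1,k} (a vertex incident to at least k/2 red edges and at least k/2 blue edges), or the graph induced by the edges of one of the two colors is isomorphic to H. -/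
/-!
Write `t = k/2 - 1`. Without a balanced star every vertex has at most `t` edges of one of the
two colours; let `A` and `B` be the vertices of the two parts with at most `t` blue edges.
Comparing the degree sums with the lower bound `2tn - t²` on both colour classes shows that
`A`, `B` and their complements all have at least `t` vertices. Double counting the edges
between a set `X` of vertices with at most `t` red edges and a set `Y` in the other part with
at most `t` blue edges gives `|X| |Y| ≤ t (|X| + |Y|)`; for the pairs `(Aᶜ, B)` and `(A, Bᶜ)`
and `n` large this forces `|A| = |B| = t` or `|Aᶜ| = |Bᶜ| = t`. Then the degree sum of the
corresponding colour is tight: the rows of `A` and the columns of `B` have only that colour,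
and every other row has exactly `t` edges of it, which must be those to `B`.
-/

open Finset

section Counting

variable {ι : Type*} [DecidableEq ι]

theorem le_ite_mem_of_le {f : ι → ℕ} {s : Finset ι} {M m : ℕ}
    (hs : ∀ i ∈ s, f i ≤ M) (hsc : ∀ i ∉ s, f i ≤ m) (i : ι) :
    f i ≤ if i ∈ s then M else m := by
  split_ifs with hi
  exacts [hs i hi, hsc i hi]

variable [Fintype ι]

theorem sum_ite_mem_const (s : Finset ι) (M m : ℕ) :
    ∑ i, (if i ∈ s then M else m) = #s * M + #sᶜ * m := by
  rw [← sum_add_sum_compl s, sum_ite_of_true fun _ h => h,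
    sum_ite_of_false fun _ h => mem_compl.1 h]
  simp [mul_comm]

theorem sum_le_card_mul_add_card_compl_mul {f : ι → ℕ} {s : Finset ι} {M m : ℕ}
    (hs : ∀ i ∈ s, f i ≤ M) (hsc : ∀ i ∉ s, f i ≤ m) :
    ∑ i, f i ≤ #s * M + #sᶜ * m :=
  sum_ite_mem_const s M m ▸ sum_le_sum fun i _ => le_ite_mem_of_le hs hsc i

theorem eq_of_card_mul_add_card_compl_mul_le_sum {f : ι → ℕ} {s : Finset ι} {M m : ℕ}
    (hs : ∀ i ∈ s, f i ≤ M) (hsc : ∀ i ∉ s, f i ≤ m)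
    (h : #s * M + #sᶜ * m ≤ ∑ i, f i) :
    (∀ i ∈ s, f i = M) ∧ ∀ i ∉ s, f i = m := by
  have hle : ∀ i ∈ univ, f i ≤ if i ∈ s then M else m := fun i _ =>
    le_ite_mem_of_le hs hsc i
  have heq := (sum_eq_sum_iff_of_le hle).1
    (le_antisymm (sum_le_sum hle) (by rwa [sum_ite_mem_const]))
  exact ⟨fun i hi => by simpa [hi] using heq i (mem_univ i),
    fun i hi => by simpa [hi] using heq i (mem_univ i)⟩

theorem le_card_of_two_mul_mul_sub_sq_le_sum {f : ι → ℕ} {s : Finset ι} {t : ℕ}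
    (hf : ∀ i, f i ≤ Fintype.card ι) (hsc : ∀ i ∉ s, f i ≤ t) (ht : t < Fintype.card ι)
    (h : 2 * t * Fintype.card ι - t ^ 2 ≤ ∑ i, f i) : t ≤ #s := by
  have hsum := sum_le_card_mul_add_card_compl_mul (fun i _ => hf i) hsc
  have hN : #s + #sᶜ = Fintype.card ι := card_add_card_compl s
  generalize Fintype.card ι = N at *
  by_contra! hlt
  have : 2 * t * N ≤ ∑ i, f i + t ^ 2 := by omega
  nlinarith [Nat.mul_lt_mul_of_lt_of_lt (Nat.sub_pos_of_lt hlt) (Nat.sub_pos_of_lt ht)]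

end Counting

section Degrees

variable {n : ℕ} (c : Fin n → Fin n → Bool)

theorem redTotal_eq_sum_redDegL : redTotal c = ∑ v, redDegL c v := by
  simp only [redTotal, redDegL, card_filter, ← univ_product_univ, sum_product]

theorem redTotal_eq_sum_redDegR : redTotal c = ∑ w, redDegR c w := by
  simp only [redTotal, redDegR, card_filter, ← univ_product_univ, sum_product]
  exact sum_comm

theorem blueTotal_eq_sum_blueDegL : blueTotal c = ∑ v, blueDegL c v := by
  simp only [blueTotal, blueDegL, card_filter, ← univ_product_univ, sum_product]

theorem blueTotal_eq_sum_blueDegR : blueTotal c = ∑ w, blueDegR c w := by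
  simp only [blueTotal, blueDegR, card_filter, ← univ_product_univ, sum_product]
  exact sum_comm

theorem redTotal_not : redTotal (fun v w => !c v w) = blueTotal c := by
  simp [redTotal, blueTotal]

theorem redDegL_not (v : Fin n) : redDegL (fun v w => !c v w) v = blueDegL c v := by
  simp [redDegL, blueDegL]

theorem redDegR_not (w : Fin n) : redDegR (fun v w => !c v w) w = blueDegR c w := by
  simp [redDegR, blueDegR]

theorem blueDegR_not (w : Fin n) : blueDegR (fun v w => !c v w) w = redDegR c w := by
  simp [redDegR, blueDegR]

theorem card_mul_card_le_of_redDegL_le_of_blueDegR_le {X Y : Finset (Fin n)} {t : ℕ}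
    (hX : ∀ v ∈ X, redDegL c v ≤ t) (hY : ∀ w ∈ Y, blueDegR c w ≤ t) :
    #X * #Y ≤ t * (#X + #Y) :=
  calc #X * #Y = ∑ v ∈ X, #{w ∈ Y | c v w = true} + ∑ w ∈ Y, #{v ∈ X | c v w = false} := by
        simp only [card_filter]
        rw [sum_comm (s := Y), ← sum_add_distrib, ← card_product, card_eq_sum_ones, sum_product]
        refine sum_congr rfl fun v _ => ?_
        rw [← sum_add_distrib]
        exact sum_congr rfl fun w _ => by cases c v w <;> rfl
    _ ≤ ∑ v ∈ X, redDegL c v + ∑ w ∈ Y, blueDegR c w := by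
        gcongr with v _ w _
        · exact card_le_card (filter_subset_filter _ (subset_univ Y))
        · exact card_le_card (filter_subset_filter _ (subset_univ X))
    _ ≤ ∑ v ∈ X, t + ∑ w ∈ Y, t := add_le_add (sum_le_sum hX) (sum_le_sum hY)
    _ = t * (#X + #Y) := by simp [mul_add, mul_comm]

end Degrees

theorem eq_and_eq_of_le_of_mul_le {t a b p q : ℕ} (hap : a ≤ p) (hbq : b + q = a + p)
    (hn : 2 * t ^ 2 + 6 * t + 2 ≤ a + p) (ha : t ≤ a) (hb : t ≤ b)
    (hpb : p * b ≤ t * (p + b)) (haq : a * q ≤ t * (a + q)) : a = t ∧ b = t := by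
  -- `hpb` reads `(p - t) (b - t) ≤ t²` with `p - t > t²`, so `b = t`; then `haq` reads
  -- `(a - t) (q - t) ≤ t²` with `q - t > t²`.
  have hb' : b = t := by nlinarith
  subst hb'
  exact ⟨by nlinarith, rfl⟩

theorem eq_and_eq_or_eq_and_eq_of_mul_le {t a b p q : ℕ} (hbq : b + q = a + p)
    (hn : 2 * t ^ 2 + 6 * t + 2 ≤ a + p) (ha : t ≤ a) (hb : t ≤ b) (hp : t ≤ p) (hq : t ≤ q)
    (hpb : p * b ≤ t * (p + b)) (haq : a * q ≤ t * (a + q)) :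
    (a = t ∧ b = t) ∨ (p = t ∧ q = t) := by
  rcases le_total a p with hap | hpa
  · exact .inl (eq_and_eq_of_le_of_mul_le hap hbq hn ha hb hpb haq)
  · exact .inr (eq_and_eq_of_le_of_mul_le hpa (by omega) (by omega) hp hq haq hpb)

section Structure

variable {n : ℕ} (c : Fin n → Fin n → Bool)

theorem redTotal_flip : redTotal (flip c) = redTotal c := by
  rw [redTotal_eq_sum_redDegL, redTotal_eq_sum_redDegR]
  rfl

theorem eq_true_of_redDegL_eq {v : Fin n} (hv : redDegL c v = n) (w : Fin n) :
    c v w = true :=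
  (card_filter_eq_iff.1 (hv.trans (card_fin n).symm) w (mem_univ w) :)

theorem redDegL_eq_of_card_eq {A : Finset (Fin n)} {t : ℕ} (hA : #A = t)
    (hAc : ∀ v ∉ A, redDegL c v ≤ t) (hred : 2 * t * n - t ^ 2 ≤ redTotal c) :
    (∀ v ∈ A, redDegL c v = n) ∧ ∀ v ∉ A, redDegL c v = t := by
  have htn : t ≤ n := hA ▸ (card_le_univ A).trans_eq (Fintype.card_fin n)
  obtain ⟨m, rfl⟩ := Nat.exists_eq_add_of_le htn
  refine eq_of_card_mul_add_card_compl_mul_le_sum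
    (fun v _ => (card_le_univ _).trans_eq (Fintype.card_fin _)) hAc ?_
  rw [← redTotal_eq_sum_redDegL, card_compl, Fintype.card_fin, hA]
  refine le_trans (le_of_eq ?_) hred
  rw [Nat.add_sub_cancel_left]
  refine (Nat.sub_eq_of_eq_add ?_).symm
  ring

theorem eq_true_iff_mem_or_mem {A B : Finset (Fin n)} {t : ℕ} (hA : #A = t) (hB : #B = t)
    (hAc : ∀ v ∉ A, redDegL c v ≤ t) (hBc : ∀ w ∉ B, redDegR c w ≤ t)
    (hred : 2 * t * n - t ^ 2 ≤ redTotal c) (v w : Fin n) :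
    c v w = true ↔ v ∈ A ∨ w ∈ B := by
  obtain ⟨hArows, hAcrows⟩ := redDegL_eq_of_card_eq c hA hAc hred
  -- `redDegL (flip c)` is `redDegR c` by definition.
  obtain ⟨hBcols, -⟩ := redDegL_eq_of_card_eq (flip c) hB hBc (by rwa [redTotal_flip])
  refine ⟨fun hvw => or_iff_not_imp_left.2 fun hv => ?_, ?_⟩
  · have hrow : B = ({w | c v w = true} : Finset (Fin n)) :=
      eq_of_subset_of_card_le (fun w hw => mem_filter.2 ⟨mem_univ w,
        eq_true_of_redDegL_eq (flip c) (hBcols w hw) v⟩) (hB ▸ (hAcrows v hv).le)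
    exact hrow ▸ mem_filter.2 ⟨mem_univ w, hvw⟩
  · rintro (hv | hw)
    exacts [eq_true_of_redDegL_eq c (hArows v hv) w,
      eq_true_of_redDegL_eq (flip c) (hBcols w hw) v]

end Structure

theorem exists_eq_iff_mem_or_mem_of_forall_degree_le {n t : ℕ} (c : Fin n → Fin n → Bool)
    (hn : 2 * t ^ 2 + 6 * t + 2 ≤ n)
    (hL : ∀ v, redDegL c v ≤ t ∨ blueDegL c v ≤ t)
    (hR : ∀ w, redDegR c w ≤ t ∨ blueDegR c w ≤ t)
    (hred : 2 * t * n - t ^ 2 ≤ redTotal c) (hblue : 2 * t * n - t ^ 2 ≤ blueTotal c) :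
    ∃ (b : Bool) (A B : Finset (Fin n)), #A = t ∧ #B = t ∧
      ∀ v w, c v w = b ↔ v ∈ A ∨ w ∈ B := by
  set A : Finset (Fin n) := {v | blueDegL c v ≤ t}
  set B : Finset (Fin n) := {w | blueDegR c w ≤ t}
  have hA : ∀ v ∈ A, blueDegL c v ≤ t := fun v hv => (mem_filter.1 hv).2
  have hAc : ∀ v ∉ A, redDegL c v ≤ t := fun v hv =>
    (hL v).resolve_right fun h => hv (mem_filter.2 ⟨mem_univ v, h⟩)
  have hB : ∀ w ∈ B, blueDegR c w ≤ t := fun w hw => (mem_filter.1 hw).2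
  have hBc : ∀ w ∉ B, redDegR c w ≤ t := fun w hw =>
    (hR w).resolve_right fun h => hw (mem_filter.2 ⟨mem_univ w, h⟩)
  have hdeg : ∀ s : Finset (Fin n), #s ≤ n := fun s => (card_le_univ s).trans_eq (card_fin n)
  have hlower : ∀ {f : Fin n → ℕ} {s : Finset (Fin n)}, (∀ v, f v ≤ n) →
      (∀ v ∉ s, f v ≤ t) → 2 * t * n - t ^ 2 ≤ ∑ v, f v → t ≤ #s := fun hf hs h =>
    le_card_of_two_mul_mul_sub_sq_le_sum (by simpa using hf) hs
      (by rw [Fintype.card_fin]; nlinarith) (by simpa using h)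
  have htA : t ≤ #A := hlower (fun _ => hdeg _) hAc (redTotal_eq_sum_redDegL c ▸ hred)
  have htAc : t ≤ #Aᶜ := hlower (fun _ => hdeg _) (fun v hv => hA v (notMem_compl.1 hv))
    (blueTotal_eq_sum_blueDegL c ▸ hblue)
  have htB : t ≤ #B := hlower (fun _ => hdeg _) hBc (redTotal_eq_sum_redDegR c ▸ hred)
  have htBc : t ≤ #Bᶜ := hlower (fun _ => hdeg _) (fun w hw => hB w (notMem_compl.1 hw))
    (blueTotal_eq_sum_blueDegR c ▸ hblue)
  have hAcB := card_mul_card_le_of_redDegL_le_of_blueDegR_le c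
    (fun v hv => hAc v (mem_compl.1 hv)) hB
  have hABc := card_mul_card_le_of_redDegL_le_of_blueDegR_le (fun v w => !c v w)
    (X := A) (Y := Bᶜ) (fun v hv => (redDegL_not c v).trans_le (hA v hv))
    (fun w hw => (blueDegR_not c w).trans_le (hBc w (mem_compl.1 hw)))
  have hsizes : #A + #Aᶜ = n ∧ #B + #Bᶜ = n := by
    simp only [card_add_card_compl, Fintype.card_fin, and_self]
  rcases eq_and_eq_or_eq_and_eq_of_mul_le (by omega) (by omega) htA htB htAc htBc hAcB hABc
    with ⟨hAt, hBt⟩ | ⟨hAt, hBt⟩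
  · exact ⟨true, A, B, hAt, hBt, eq_true_iff_mem_or_mem c hAt hBt hAc hBc hred⟩
  · refine ⟨false, Aᶜ, Bᶜ, hAt, hBt, fun v w => ?_⟩
    rw [← Bool.not_eq_true', eq_true_iff_mem_or_mem (fun v w => !c v w) hAt hBt
      (fun v hv => (redDegL_not c v).trans_le (hA v (notMem_compl.1 hv)))
      (fun w hw => (redDegR_not c w).trans_le (hB w (notMem_compl.1 hw)))
      (by rwa [redTotal_not])]

/-- Characterization of the extremal colorings for stars.  Let `k ≥ 2` be even and
`n ≥ k²/2 + k - 2`, and let `H` be the bipartite graph with parts `A = A₁ ⊔ A₂` and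
`B = B₁ ⊔ B₂`, `|A₂| = |B₁| = (k-2)/2`, whose edges are all pairs between `A₁` and `B₁`
and all pairs between `A₂` and `B`.  Every 2-edge coloring of `K_{n,n}` with at least
`a(n,k) = (k-2)·n - (k-2)²/4` edges in each color class either contains a balanced copy of
`K_{1,k}` (a vertex incident to at least `k/2` red and at least `k/2` blue edges), or the
graph formed by the edges of one of the two colors is isomorphic to `H`: its edges are
exactly those between `A₁` and `B₁` together with those between `A₂` and the whole
opposite part, for some sets `A₂`, `B₁` of size `(k-2)/2` in the two parts (in one of the
two possible orientations). -/
theorem bbal_stars_characterization (k n : ℕ) (hk2 : 2 ≤ k) (hkeven : Even k)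
    (hn : k ^ 2 / 2 + k - 2 ≤ n) :
    ∀ c : Fin n → Fin n → Bool,
      (k - 2) * n - (k - 2) ^ 2 / 4 ≤ redTotal c →
      (k - 2) * n - (k - 2) ^ 2 / 4 ≤ blueTotal c →
      HasBalancedStar c k ∨
      (∃ (b : Bool) (A₂ B₁ : Finset (Fin n)),
        A₂.card = (k - 2) / 2 ∧ B₁.card = (k - 2) / 2 ∧
        ((∀ v w, c v w = b ↔ (v ∈ A₂ ∨ w ∈ B₁)) ∨
         (∀ v w, c v w = b ↔ (w ∈ A₂ ∨ v ∈ B₁)))) := by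
  intro c hred hblue
  obtain ⟨t, rfl⟩ : ∃ t, k = 2 * t + 2 := ⟨k / 2 - 1, by obtain ⟨m, rfl⟩ := hkeven; omega⟩
  have hhalf : (2 * t + 2) / 2 = t + 1 := by omega
  have hsub : 2 * t + 2 - 2 = 2 * t := by omega
  have hsq : (2 * t + 2) ^ 2 / 2 + (2 * t + 2) - 2 = 2 * t ^ 2 + 6 * t + 2 := by
    rw [show (2 * t + 2) ^ 2 = 2 * (2 * t ^ 2 + 4 * t + 2) by ring]; omega
  have hcount : (2 * t) * n - (2 * t) ^ 2 / 4 = 2 * t * n - t ^ 2 := by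
    rw [mul_pow, show 2 ^ 2 = 4 from rfl, Nat.mul_div_cancel_left _ (by norm_num)]
  rw [hsub, hcount] at hred hblue
  rw [hsq] at hn
  rw [hsub, Nat.mul_div_cancel_left _ two_pos]
  by_cases hstar : HasBalancedStar c (2 * t + 2)
  · exact .inl hstar
  simp only [HasBalancedStar, hhalf, not_or, not_exists, not_and, not_le] at hstar
  obtain ⟨b, A, B, hA, hB, hcol⟩ := exists_eq_iff_mem_or_mem_of_forall_degree_le c hn
    (fun v => by have := hstar.1 v; omega) (fun w => by have := hstar.2 w; omega) hred hblue
  exact .inr ⟨b, A, B, hA, hB, .inl hcol⟩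
end
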